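/- arXiv:1703.10897 — 7 statements merged into one kernel-verified Lean document; each statement's English description precedes it below -/
import Mathlib

section
/- For every multi-unit assignment problem (R,q), the set U(R,q) of efficient utility profiles contains a Lorenz dominant element: there exists U* ∈ U(R,q) such that for every U ∈ U(R,q) and every t with 1 ≤ t ≤ |N|, the sum of the t smallest coordinates of U* is greater than or equal to the sum of the t smallest coordinates of U. -/
open Finset

/-- A multi-unit assignment problem (MAP): `n` agents (indexed by `Fin n`),
a finite set `M` of objects, integer capacities `q` with `q k ≥ 1`, and a
Boolean acceptability matrix `r` with `q k ≤ |{i : r i k = 1}|` for each object. -/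
structure MAP (n : ℕ) (M : Type*) [Fintype M] where
  r : Fin n → M → Bool
  q : M → ℕ
  q_pos : ∀ k, 1 ≤ q k
  enough : ∀ k, q k ≤ (Finset.univ.filter fun i => r i k = true).card

variable {n : ℕ} {M : Type*} [Fintype M]

/-- `Z` is a random assignment matrix (RAM) for the MAP `P`. -/
def IsRAM (P : MAP n M) (Z : Fin n → M → ℝ) : Prop :=
  (∀ i k, 0 ≤ Z i k) ∧ (∀ i k, Z i k ≤ 1) ∧
  (∀ k, ∑ i, Z i k ≤ (P.q k : ℝ)) ∧
  (∀ i k, 0 < Z i k → P.r i k = true)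

/-- Utility of agent `i` at assignment `Z`: expected number of objects received. -/
noncomputable def util (Z : Fin n → M → ℝ) (i : Fin n) : ℝ := ∑ k, Z i k

/-- The set `U(R,q)` of efficient utility profiles. -/
def effU (P : MAP n M) : Set (Fin n → ℝ) :=
  {U | ∃ Z, IsRAM P Z ∧ (∑ i, util Z i) = (∑ k, (P.q k : ℝ)) ∧ ∀ i, U i = util Z i}

/-- The coordinates of `U` sorted in ascending order: `γ(U)`. -/
noncomputable def sortedVec (U : Fin n → ℝ) : Fin n → ℝ := U ∘ Tuple.sort U

/-- Lexicographic (weak) comparison of vectors. -/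
def lexLE (U V : Fin n → ℝ) : Prop :=
  U = V ∨ ∃ i, U i < V i ∧ ∀ j, j < i → U j = V j

/-- Leximin comparison: compare ascending-sorted vectors lexicographically. -/
def leximinLE (U V : Fin n → ℝ) : Prop := lexLE (sortedVec U) (sortedVec V)

/-- `U` is a leximin-maximal element of the set of efficient utility profiles of `P`.
(The unique such element is the egalitarian solution `φ^ES(P)`.) -/
def LeximinMaximal (P : MAP n M) (U : Fin n → ℝ) : Prop :=
  U ∈ effU P ∧ ∀ U' ∈ effU P, leximinLE U U' → leximinLE U' U

/-- Sum of the `t` smallest coordinates of `U`. -/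
noncomputable def lorenzSum (U : Fin n → ℝ) (t : ℕ) : ℝ :=
  ∑ i ∈ Finset.univ.filter (fun i : Fin n => (i : ℕ) < t), sortedVec U i

/-- `z` lies in agent `i`'s budget set at prices `p`. -/
def InBudget (P : MAP n M) (p : M → ℝ) (i : Fin n) (z : M → ℝ) : Prop :=
  (∀ k, 0 ≤ z k) ∧ (∀ k, z k ≤ 1) ∧ (∀ k, 0 < z k → P.r i k = true) ∧
  (∑ k, p k * z k ≤ 1)

/-- `(Z, p)` is a constrained competitive equilibrium (CCE) of `P`. -/
def IsCCE (P : MAP n M) (Z : Fin n → M → ℝ) (p : M → ℝ) : Prop :=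
  IsRAM P Z ∧ (∀ k, 0 ≤ p k) ∧
  ∀ i, InBudget P p i (Z i) ∧ ∀ z, InBudget P p i z → (∑ k, z k) ≤ util Z i

/-- Object `k` is over-demanded: its total demand strictly exceeds its capacity. -/
def Overdemanded (P : MAP n M) (k : M) : Prop :=
  P.q k < (Finset.univ.filter fun i => P.r i k = true).card

instance (P : MAP n M) : DecidablePred (Overdemanded P) :=
  fun _ => Nat.decLt _ _

/-- The restriction of the MAP `P` to its over-demanded objects. -/
def restrictO (P : MAP n M) : MAP n {k : M // Overdemanded P k} where
  r := fun i k => P.r i k.1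
  q := fun k => P.q k.1
  q_pos := fun k => P.q_pos k.1
  enough := fun k => P.enough k.1

/-- Number of perfect objects that agent `i` finds acceptable. -/
def perfectCount (P : MAP n M) (i : Fin n) : ℕ :=
  (Finset.univ.filter fun k => ¬ Overdemanded P k ∧ P.r i k = true).card

/-- `P'` is a perfect extension of `P` for agent `i`: it adjoins one new object
(`none`) acceptable to `i`, with capacity equal to its total demand, keeping
everything else unchanged. -/
def IsPerfectExtension (P : MAP n M) (P' : MAP n (Option M)) (i : Fin n) : Prop :=
  (∀ j k, P'.r j (some k) = P.r j k) ∧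
  (∀ k, P'.q (some k) = P.q k) ∧
  P'.r i none = true ∧
  P'.q none = (Finset.univ.filter fun j => P'.r j none = true).card

/-- Extend an assignment by giving each agent accepting the new object one full unit of it. -/
noncomputable def extendZ (P' : MAP n (Option M)) (Z : Fin n → M → ℝ) :
    Fin n → Option M → ℝ :=
  fun j k => match k with
    | none => if P'.r j none = true then (1 : ℝ) else 0
    | some k' => Z j k'

/-- Extend a price vector by pricing the new object at zero. -/
def extendP (p : M → ℝ) : Option M → ℝ :=
  fun k => match k with
    | none => 0
    | some k' => p k'

/-- The serial dictatorship (priority) assignment: agents are processed in the order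
`σ 0, σ 1, …`; agent `i` receives one unit of object `k` iff she reports `k`
acceptable and fewer than `q k` earlier agents report `k` acceptable. -/
noncomputable def SD (P : MAP n M) (σ : Equiv.Perm (Fin n)) (i : Fin n) (k : M) : ℝ :=
  if P.r i k = true ∧
      (Finset.univ.filter fun j : Fin n => σ.symm j < σ.symm i ∧ P.r j k = true).card < P.q k
  then 1 else 0

/-- Utility of agent `i` at assignment `Z`, counting only objects acceptable
under the (true) matrix of `P`. -/
noncomputable def trueUtil (P : MAP n M) (Z : Fin n → M → ℝ) (i : Fin n) : ℝ :=
  ∑ k ∈ Finset.univ.filter (fun k => P.r i k = true), Z i k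

/-- The coalitional value `μ(S) = Σ_k min(|{i ∈ S : r i k = 1}|, q k)`. -/
def coalValue (q : M → ℕ) (r : Fin n → M → Bool) (S : Finset (Fin n)) : ℕ :=
  ∑ k, min ((S.filter fun i => r i k = true).card) (q k)

/-! ### Auxiliary development for Statement 0 -/

section ESAux

lemma es_util_eq (Z : Fin n → M → ℝ) (i : Fin n) : util Z i = ∑ k, Z i k := rfl

/-- For an efficient RAM, every column sum equals the capacity. -/
lemma es_colsum (P : MAP n M) {Z : Fin n → M → ℝ} (hZ : IsRAM P Z)
    (hE : (∑ i, util Z i) = (∑ k, (P.q k : ℝ))) (k : M) :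
    ∑ i, Z i k = (P.q k : ℝ) := by
  have h1 : (∑ k, ∑ i, Z i k) = ∑ k, (P.q k : ℝ) := by
    rw [Finset.sum_comm]; simpa [util] using hE
  exact (Finset.sum_eq_sum_iff_of_le (fun k _ => hZ.2.2.1 k)).mp h1 k (Finset.mem_univ k)

/-- Augmenting-path reachability between two assignments. -/
inductive EsReach (Zs Z : Fin n → M → ℝ) (i : Fin n) : Fin n → Prop
  | refl : EsReach Zs Z i i
  | step {b a : Fin n} {k : M} : EsReach Zs Z i b → Zs b k < Z b k → Z a k < Zs a k →
      EsReach Zs Z i a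

/-- If `a` is reachable from `i`, then for arbitrarily small `ε > 0` we can augment
`Zs` along a path, transferring `ε` units of utility from `a` to `i`. -/
lemma es_aug {P : MAP n M} {Zs Z : Fin n → M → ℝ} (hZs : IsRAM P Zs) (hZ : IsRAM P Z)
    {i a : Fin n} (h : EsReach Zs Z i a) :
    ∃ c : ℝ, 0 < c ∧ ∀ δ : ℝ, 0 < δ → ∃ ε : ℝ, 0 < ε ∧ ε ≤ δ ∧
      ∃ Z2 : Fin n → M → ℝ, IsRAM P Z2 ∧
        (∀ j, util Z2 j = util Zs j +
          ε * ((if j = i then (1:ℝ) else 0) - (if j = a then (1:ℝ) else 0))) ∧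
        (∀ j k, |Z2 j k - Zs j k| ≤ c * ε) := by
  classical
  induction h with
  | refl =>
      refine ⟨1, one_pos, fun δ hδ => ⟨δ, hδ, le_refl δ, Zs, hZs, fun j => by ring_nf,
        fun j k => by simpa using hδ.le⟩⟩
  | @step b a k hb h1 h2 ih =>
      obtain ⟨c, hc, hF⟩ := ih
      have hab : a ≠ b := by rintro rfl; exact absurd h1 (not_lt.mpr h2.le)
      refine ⟨c + 1, by linarith, fun δ hδ => ?_⟩
      have hg1 : 0 < Z b k - Zs b k := by linarith
      have hg2 : 0 < Zs a k - Z a k := by linarith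
      have hc1 : 0 < c + 1 := by linarith
      obtain ⟨ε, hε0, hεδ', Z2, hZ2, hut2, hbd2⟩ :=
        hF (min δ (min ((Z b k - Zs b k)/(c+1)) ((Zs a k - Z a k)/(c+1))))
          (lt_min hδ (lt_min (by positivity) (by positivity)))
      have hεδ : ε ≤ δ := hεδ'.trans (min_le_left _ _)
      have hkey1 : (c+1) * ε ≤ Z b k - Zs b k := by
        have h3 : ε ≤ (Z b k - Zs b k)/(c+1) :=
          hεδ'.trans ((min_le_right _ _).trans (min_le_left _ _))
        calc (c+1)*ε ≤ (c+1) * ((Z b k - Zs b k)/(c+1)) :=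
              mul_le_mul_of_nonneg_left h3 hc1.le
        _ = Z b k - Zs b k := by field_simp
      have hkey2 : (c+1) * ε ≤ Zs a k - Z a k := by
        have h3 : ε ≤ (Zs a k - Z a k)/(c+1) :=
          hεδ'.trans ((min_le_right _ _).trans (min_le_right _ _))
        calc (c+1)*ε ≤ (c+1) * ((Zs a k - Z a k)/(c+1)) :=
              mul_le_mul_of_nonneg_left h3 hc1.le
        _ = Zs a k - Z a k := by field_simp
      have hb1 := abs_le.mp (hbd2 b k)
      have hb2 := abs_le.mp (hbd2 a k)
      refine ⟨ε, hε0, hεδ, fun j k' =>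
        Z2 j k' + (if j = b ∧ k' = k then ε else 0) - (if j = a ∧ k' = k then ε else 0),
        ⟨?_, ?_, ?_, ?_⟩, ?_, ?_⟩
      · -- nonneg
        intro j k'
        dsimp only
        by_cases hB : j = b ∧ k' = k
        · have hA : ¬ (j = a ∧ k' = k) := fun hA' => hab (hA'.1.symm.trans hB.1)
          rw [if_pos hB, if_neg hA]
          have := hZ2.1 j k'; linarith
        · by_cases hA : j = a ∧ k' = k
          · rw [if_neg hB, if_pos hA]
            obtain ⟨rfl, rfl⟩ := hA
            have := hZ.1 j k'; linarith [hb2.1]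
          · rw [if_neg hB, if_neg hA]
            have := hZ2.1 j k'; linarith
      · -- ≤ 1
        intro j k'
        dsimp only
        by_cases hB : j = b ∧ k' = k
        · have hA : ¬ (j = a ∧ k' = k) := fun hA' => hab (hA'.1.symm.trans hB.1)
          rw [if_pos hB, if_neg hA]
          obtain ⟨rfl, rfl⟩ := hB
          have := hZ.2.1 j k'; linarith [hb1.2]
        · by_cases hA : j = a ∧ k' = k
          · rw [if_neg hB, if_pos hA]
            have := hZ2.2.1 j k'; linarith
          · rw [if_neg hB, if_neg hA]
            have := hZ2.2.1 j k'; linarith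
      · -- column sums
        intro k'
        dsimp only
        have e1 : (∑ j, ((if j = b ∧ k' = k then ε else 0) : ℝ)) = if k' = k then ε else 0 := by
          by_cases hk : k' = k <;> simp [hk, Finset.sum_ite_eq']
        have e2 : (∑ j, ((if j = a ∧ k' = k then ε else 0) : ℝ)) = if k' = k then ε else 0 := by
          by_cases hk : k' = k <;> simp [hk, Finset.sum_ite_eq']
        have hle := hZ2.2.2.1 k'
        calc ∑ j, (Z2 j k' + (if j = b ∧ k' = k then ε else 0)
                - (if j = a ∧ k' = k then ε else 0))
            = (∑ j, Z2 j k') + (∑ j, ((if j = b ∧ k' = k then ε else 0) : ℝ))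
              - (∑ j, ((if j = a ∧ k' = k then ε else 0) : ℝ)) := by
              rw [Finset.sum_sub_distrib, Finset.sum_add_distrib]
        _ = ∑ j, Z2 j k' := by rw [e1, e2]; ring
        _ ≤ (P.q k' : ℝ) := hle
      · -- support
        intro j k' hpos
        dsimp only at hpos
        by_cases hB : j = b ∧ k' = k
        · obtain ⟨rfl, rfl⟩ := hB
          exact hZ.2.2.2 j k' (lt_of_le_of_lt (hZs.1 j k') h1)
        · by_cases hA : j = a ∧ k' = k
          · rw [if_neg hB, if_pos hA] at hpos
            exact hZ2.2.2.2 j k' (by linarith)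
          · rw [if_neg hB, if_neg hA] at hpos
            exact hZ2.2.2.2 j k' (by linarith)
      · -- utility formula
        intro j
        have e1 : (∑ k', ((if j = b ∧ k' = k then ε else 0) : ℝ)) = if j = b then ε else 0 := by
          by_cases hj : j = b <;> simp [hj, Finset.sum_ite_eq']
        have e2 : (∑ k', ((if j = a ∧ k' = k then ε else 0) : ℝ)) = if j = a then ε else 0 := by
          by_cases hj : j = a <;> simp [hj, Finset.sum_ite_eq']
        have e3 : util (fun j k' =>
            Z2 j k' + (if j = b ∧ k' = k then ε else 0) - (if j = a ∧ k' = k then ε else 0)) j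
            = util Z2 j + (if j = b then ε else 0) - (if j = a then ε else 0) := by
          simp only [es_util_eq]
          rw [Finset.sum_sub_distrib, Finset.sum_add_distrib, e1, e2]
        rw [e3, hut2 j]
        split_ifs <;> ring
      · -- perturbation bound
        intro j k'
        dsimp only
        by_cases hB : j = b ∧ k' = k
        · have hA : ¬ (j = a ∧ k' = k) := fun hA' => hab (hA'.1.symm.trans hB.1)
          rw [if_pos hB, if_neg hA]
          obtain ⟨rfl, rfl⟩ := hB
          rw [abs_le]; constructor <;> linarith [hb1.1, hb1.2]
        · by_cases hA : j = a ∧ k' = k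
          · rw [if_neg hB, if_pos hA]
            obtain ⟨rfl, rfl⟩ := hA
            rw [abs_le]; constructor <;> linarith [hb2.1, hb2.2]
          · rw [if_neg hB, if_neg hA]
            have := abs_le.mp (hbd2 j k')
            rw [abs_le]; constructor <;> [linarith; linarith]

/-- Closure inequality: the total utility difference over a reachability-closed set is ≤ 0. -/
lemma es_closure (P : MAP n M) {Zs Z : Fin n → M → ℝ} (hZs : IsRAM P Zs)
    (hZsE : (∑ j, util Zs j) = ∑ k, (P.q k : ℝ)) (hZ : IsRAM P Z)
    (hZE : (∑ j, util Z j) = ∑ k, (P.q k : ℝ))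
    (A : Finset (Fin n))
    (hA : ∀ a ∈ A, ∀ k, ∀ b, Zs a k < Z a k → Z b k < Zs b k → b ∈ A) :
    ∑ a ∈ A, (util Z a - util Zs a) ≤ 0 := by
  have h0 : ∑ a ∈ A, (util Z a - util Zs a) = ∑ k, ∑ a ∈ A, (Z a k - Zs a k) := by
    rw [← Finset.sum_comm]
    exact Finset.sum_congr rfl fun a _ => by
      simp [es_util_eq, Finset.sum_sub_distrib]
  rw [h0]
  apply Finset.sum_nonpos; intro k _
  by_cases hcase : ∃ a ∈ A, Zs a k < Z a k
  · obtain ⟨a0, ha0, ha0k⟩ := hcase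
    have hsub : ∀ b, Z b k < Zs b k → b ∈ A := fun b hb => hA a0 ha0 k b ha0k hb
    have htot : ∑ a, (Z a k - Zs a k) = 0 := by
      rw [Finset.sum_sub_distrib, es_colsum P hZ hZE k, es_colsum P hZs hZsE k, sub_self]
    have hsdiff := Finset.sum_sdiff_eq_sub (f := fun a => Z a k - Zs a k) (Finset.subset_univ A)
    have hrest : 0 ≤ ∑ a ∈ Finset.univ \ A, (Z a k - Zs a k) := by
      apply Finset.sum_nonneg; intro b hb
      have hbA : b ∉ A := (Finset.mem_sdiff.mp hb).2
      by_contra hneg; push_neg at hneg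
      exact hbA (hsub b (by linarith))
    linarith
  · push_neg at hcase
    exact Finset.sum_nonpos fun a ha => by linarith [hcase a ha]

lemma es_card_filter (t : ℕ) (ht : t ≤ n) :
    (Finset.univ.filter fun j : Fin n => (j : ℕ) < t).card = t := by
  have h : ∀ m ∈ Finset.range t, m < n := fun m hm =>
    lt_of_lt_of_le (Finset.mem_range.mp hm) ht
  have e : (Finset.univ.filter fun j : Fin n => (j : ℕ) < t) = (Finset.range t).attachFin h := by
    ext j; simp [Finset.mem_attachFin, Finset.mem_range]
  rw [e, Finset.card_attachFin, Finset.card_range]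

lemma es_effU_nonempty (P : MAP n M) : (effU P).Nonempty := by
  classical
  choose T hT1 hT2 using fun k => Finset.exists_subset_card_eq (P.enough k)
  have hcol : ∀ k, (∑ i, ((if i ∈ T k then 1 else 0) : ℝ)) = (P.q k : ℝ) := by
    intro k
    rw [Finset.sum_ite_mem, Finset.univ_inter, Finset.sum_const, hT2 k]
    simp
  refine ⟨fun i => util (fun i k => if i ∈ T k then (1:ℝ) else 0) i,
    (fun i k => if i ∈ T k then (1:ℝ) else 0), ⟨fun i k => ?_, fun i k => ?_,
      fun k => (hcol k).le, fun i k hpos => ?_⟩, ?_, fun i => rfl⟩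
  · dsimp only; split <;> norm_num
  · dsimp only; split <;> norm_num
  · dsimp only at hpos
    by_cases h : i ∈ T k
    · exact (Finset.mem_filter.mp (hT1 k h)).2
    · simp [h] at hpos
  · simp only [es_util_eq]
    rw [Finset.sum_comm]
    exact Finset.sum_congr rfl fun k _ => hcol k

lemma es_effU_isCompact (P : MAP n M) : IsCompact (effU P) := by
  have hev : ∀ (i : Fin n) (k : M), Continuous fun Z : Fin n → M → ℝ => Z i k :=
    fun i k => (continuous_apply k).comp (continuous_apply i)
  have hutil : ∀ i : Fin n, Continuous fun Z : Fin n → M → ℝ => util Z i := by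
    intro i
    have : Continuous fun Z : Fin n → M → ℝ => ∑ k, Z i k :=
      continuous_finset_sum _ fun k _ => hev i k
    simpa [es_util_eq] using this
  have himg : effU P = (fun Z (i : Fin n) => util Z i) ''
      {Z | IsRAM P Z ∧ (∑ i, util Z i) = ∑ k, (P.q k : ℝ)} := by
    ext U; constructor
    · rintro ⟨Z, h1, h2, h3⟩
      exact ⟨Z, ⟨h1, h2⟩, (funext fun i => (h3 i).symm)⟩
    · rintro ⟨Z, ⟨h1, h2⟩, rfl⟩
      exact ⟨Z, h1, h2, fun i => rfl⟩
  have hbox : IsCompact (Set.univ.pi fun _ : Fin n => Set.univ.pi fun _ : M =>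
      Set.Icc (0:ℝ) 1) :=
    isCompact_univ_pi fun _ => isCompact_univ_pi fun _ => isCompact_Icc
  have hKeq : {Z : Fin n → M → ℝ | IsRAM P Z ∧ (∑ i, util Z i) = ∑ k, (P.q k : ℝ)} =
      (((({Z : Fin n → M → ℝ | ∀ i k, 0 ≤ Z i k} ∩
        {Z | ∀ i k, Z i k ≤ 1}) ∩
        {Z | ∀ k, ∑ i, Z i k ≤ (P.q k : ℝ)}) ∩
        {Z | ∀ i k, P.r i k = false → Z i k ≤ 0}) ∩
        {Z | (∑ i, util Z i) = ∑ k, (P.q k : ℝ)}) := by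
    ext Z
    simp only [Set.mem_setOf_eq, Set.mem_inter_iff, IsRAM]
    constructor
    · rintro ⟨⟨h1, h2, h3, h4⟩, h5⟩
      refine ⟨⟨⟨⟨h1, h2⟩, h3⟩, fun i k hf => ?_⟩, h5⟩
      by_contra hpos; push_neg at hpos
      have h6 := h4 i k hpos
      rw [h6] at hf
      exact absurd hf (by simp)
    · rintro ⟨⟨⟨⟨h1, h2⟩, h3⟩, h4⟩, h5⟩
      refine ⟨⟨h1, h2, h3, fun i k hpos => ?_⟩, h5⟩
      cases hr : P.r i k
      · exact absurd (h4 i k hr) (not_le.mpr hpos)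
      · rfl
  have hKc : IsCompact {Z : Fin n → M → ℝ | IsRAM P Z ∧
      (∑ i, util Z i) = ∑ k, (P.q k : ℝ)} := by
    apply IsCompact.of_isClosed_subset hbox
    · rw [hKeq]
      refine IsClosed.inter (IsClosed.inter (IsClosed.inter (IsClosed.inter ?_ ?_) ?_) ?_) ?_
      · have e : {Z : Fin n → M → ℝ | ∀ i k, 0 ≤ Z i k} =
            ⋂ i, ⋂ k, {Z : Fin n → M → ℝ | 0 ≤ Z i k} := by ext Z; simp
        rw [e]
        exact isClosed_iInter fun i => isClosed_iInter fun k =>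
          isClosed_le continuous_const (hev i k)
      · have e : {Z : Fin n → M → ℝ | ∀ i k, Z i k ≤ 1} =
            ⋂ i, ⋂ k, {Z : Fin n → M → ℝ | Z i k ≤ 1} := by ext Z; simp
        rw [e]
        exact isClosed_iInter fun i => isClosed_iInter fun k =>
          isClosed_le (hev i k) continuous_const
      · have e : {Z : Fin n → M → ℝ | ∀ k, ∑ i, Z i k ≤ (P.q k : ℝ)} =
            ⋂ k, {Z : Fin n → M → ℝ | ∑ i, Z i k ≤ (P.q k : ℝ)} := by ext Z; simp
        rw [e]
        exact isClosed_iInter fun k =>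
          isClosed_le (continuous_finset_sum _ fun i _ => hev i k) continuous_const
      · have e : {Z : Fin n → M → ℝ | ∀ i k, P.r i k = false → Z i k ≤ 0} =
            ⋂ i, ⋂ k, {Z : Fin n → M → ℝ | P.r i k = false → Z i k ≤ 0} := by ext Z; simp
        rw [e]
        refine isClosed_iInter fun i => isClosed_iInter fun k => ?_
        by_cases hr : P.r i k = false
        · have e2 : {Z : Fin n → M → ℝ | P.r i k = false → Z i k ≤ 0} =
              {Z : Fin n → M → ℝ | Z i k ≤ 0} := by ext Z; simp [hr]
          rw [e2]; exact isClosed_le (hev i k) continuous_const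
        · have e2 : {Z : Fin n → M → ℝ | P.r i k = false → Z i k ≤ 0} = Set.univ := by
            ext Z; simp [hr]
          rw [e2]; exact isClosed_univ
      · exact isClosed_eq (continuous_finset_sum _ fun i _ => hutil i) continuous_const
    · intro Z hZ
      rw [Set.mem_univ_pi]
      intro i
      rw [Set.mem_univ_pi]
      intro k
      exact ⟨hZ.1.1 i k, hZ.1.2.1 i k⟩
  rw [himg]
  exact hKc.image (continuous_pi fun i => hutil i)

end ESAux
/-- For every MAP, the set of efficient utility profiles contains a
Lorenz dominant element: some `U* ∈ U(R,q)` such that for every `U ∈ U(R,q)` and every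
`t` with `1 ≤ t ≤ n`, the sum of the `t` smallest coordinates of `U*` is at least
the sum of the `t` smallest coordinates of `U`. -/
theorem es_lorenz_dominant {n : ℕ} {M : Type*} [Fintype M] (P : MAP n M) :
    ∃ Ustar ∈ effU P, ∀ U ∈ effU P, ∀ t : ℕ, 1 ≤ t → t ≤ n →
      lorenzSum U t ≤ lorenzSum Ustar t := by
  classical
  have hfc : Continuous fun U : Fin n → ℝ => ∑ j, (U j)^2 :=
    continuous_finset_sum _ fun j _ => (continuous_apply j).pow 2
  obtain ⟨Ustar, hUmem, hminOn⟩ :=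
    (es_effU_isCompact P).exists_isMinOn (es_effU_nonempty P) hfc.continuousOn
  have hmin : ∀ V ∈ effU P, (∑ j, (Ustar j)^2) ≤ ∑ j, (V j)^2 := isMinOn_iff.mp hminOn
  obtain ⟨Zs, hZsRAM, hZsE, hZsU⟩ := hUmem
  have key : ∀ (Z : Fin n → M → ℝ), IsRAM P Z → ∀ i' a : Fin n, EsReach Zs Z i' a →
      util Zs a ≤ util Zs i' := by
    intro Z hZ i' a hreach
    by_cases hai : a = i'
    · rw [hai]
    obtain ⟨c, hc, hF⟩ := es_aug hZsRAM hZ hreach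
    have hai' : i' ≠ a := fun h => hai h.symm
    refine le_of_forall_pos_le_add fun δ hδ => ?_
    obtain ⟨ε, hε0, hεδ, Z2, hZ2, hut2, _⟩ := hF δ hδ
    have hzero : (∑ j, (ε * ((if j = i' then (1:ℝ) else 0) - (if j = a then 1 else 0)))) = 0 := by
      rw [← Finset.mul_sum, Finset.sum_sub_distrib]
      simp [Finset.sum_ite_eq']
    have hU2mem : (fun j => util Z2 j) ∈ effU P := by
      refine ⟨Z2, hZ2, ?_, fun j => rfl⟩
      calc ∑ j, util Z2 j
          = ∑ j, (util Zs j + ε * ((if j = i' then (1:ℝ) else 0) - (if j = a then 1 else 0))) :=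
            Finset.sum_congr rfl fun j _ => hut2 j
      _ = (∑ j, util Zs j) +
            ∑ j, (ε * ((if j = i' then (1:ℝ) else 0) - (if j = a then 1 else 0))) :=
            Finset.sum_add_distrib
      _ = ∑ k, (P.q k : ℝ) := by rw [hzero, add_zero, hZsE]
    have hnorm := hmin _ hU2mem
    have hUi : util Z2 i' = util Zs i' + ε := by
      rw [hut2 i', if_pos rfl, if_neg hai']; ring
    have hUa : util Z2 a = util Zs a - ε := by
      rw [hut2 a, if_neg hai, if_pos rfl]; ring
    have hoff : ∀ j, j ≠ i' → j ≠ a → util Z2 j = util Zs j := by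
      intro j hj1 hj2; rw [hut2 j, if_neg hj1, if_neg hj2]; ring
    have hsum2 : (∑ j, (util Z2 j)^2) - (∑ j, (util Zs j)^2)
        = 2*ε*(util Zs i' - util Zs a) + 2*ε^2 := by
      rw [← Finset.sum_sub_distrib]
      have hvan : ∀ j ∈ Finset.univ, j ∉ ({i', a} : Finset (Fin n)) →
          (util Z2 j)^2 - (util Zs j)^2 = 0 := by
        intro j _ hj
        simp only [Finset.mem_insert, Finset.mem_singleton, not_or] at hj
        rw [hoff j hj.1 hj.2]; ring
      rw [← Finset.sum_subset (Finset.subset_univ ({i', a} : Finset (Fin n))) hvan]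
      rw [Finset.sum_pair hai']
      rw [hUi, hUa]; ring
    have hUeq : (∑ j, (Ustar j)^2) = ∑ j, (util Zs j)^2 :=
      Finset.sum_congr rfl fun j _ => by rw [hZsU j]
    have hx : 0 ≤ 2*ε*(util Zs i' - util Zs a) + 2*ε^2 := by linarith
    nlinarith [hx, hε0, hεδ]
  refine ⟨Ustar, ⟨Zs, hZsRAM, hZsE, hZsU⟩, ?_⟩
  intro U hU t ht1 ht2
  obtain ⟨Z, hZRAM, hZE, hZU⟩ := hU
  have claimC : ∀ lam : ℝ,
      (∑ j ∈ Finset.univ.filter (fun j => util Zs j < lam), util Z j) ≤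
      ∑ j ∈ Finset.univ.filter (fun j => util Zs j < lam), util Zs j := by
    intro lam
    have hAS : (Finset.univ.filter fun a => ∃ i', util Zs i' < lam ∧ EsReach Zs Z i' a)
        = Finset.univ.filter (fun j => util Zs j < lam) := by
      apply Finset.Subset.antisymm
      · intro a ha
        obtain ⟨i', hi', hre⟩ := (Finset.mem_filter.mp ha).2
        exact Finset.mem_filter.mpr ⟨Finset.mem_univ _,
          lt_of_le_of_lt (key Z hZRAM i' a hre) hi'⟩
      · intro i' hi'
        exact Finset.mem_filter.mpr ⟨Finset.mem_univ _,
          ⟨i', (Finset.mem_filter.mp hi').2, EsReach.refl⟩⟩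
    have hclosed : ∀ a ∈ (Finset.univ.filter fun a =>
        ∃ i', util Zs i' < lam ∧ EsReach Zs Z i' a), ∀ k, ∀ b,
        Zs a k < Z a k → Z b k < Zs b k →
        b ∈ (Finset.univ.filter fun a => ∃ i', util Zs i' < lam ∧ EsReach Zs Z i' a) := by
      intro a ha k b h1 h2
      obtain ⟨i', hi', hre⟩ := (Finset.mem_filter.mp ha).2
      exact Finset.mem_filter.mpr ⟨Finset.mem_univ _, ⟨i', hi', EsReach.step hre h1 h2⟩⟩
    have hclos := es_closure P hZsRAM hZsE hZRAM hZE _ hclosed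
    rw [hAS, Finset.sum_sub_distrib] at hclos
    linarith
  have claimA : ∀ lam : ℝ, (∑ j, min (U j) lam) ≤ ∑ j, min (Ustar j) lam := by
    intro lam
    rw [← Finset.sum_filter_add_sum_filter_not Finset.univ (fun j => util Zs j < lam)
        (fun j => min (U j) lam),
      ← Finset.sum_filter_add_sum_filter_not Finset.univ (fun j => util Zs j < lam)
        (fun j => min (Ustar j) lam)]
    have p1 : (∑ j ∈ Finset.univ.filter (fun j => util Zs j < lam), min (U j) lam) ≤
        ∑ j ∈ Finset.univ.filter (fun j => util Zs j < lam), min (Ustar j) lam := by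
      calc (∑ j ∈ Finset.univ.filter (fun j => util Zs j < lam), min (U j) lam)
          ≤ ∑ j ∈ Finset.univ.filter (fun j => util Zs j < lam), U j :=
            Finset.sum_le_sum fun j _ => min_le_left _ _
      _ = ∑ j ∈ Finset.univ.filter (fun j => util Zs j < lam), util Z j :=
            Finset.sum_congr rfl fun j _ => hZU j
      _ ≤ ∑ j ∈ Finset.univ.filter (fun j => util Zs j < lam), util Zs j := claimC lam
      _ = ∑ j ∈ Finset.univ.filter (fun j => util Zs j < lam), min (Ustar j) lam := by
            refine Finset.sum_congr rfl fun j hj => ?_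
            have hlt := (Finset.mem_filter.mp hj).2
            rw [← hZsU j] at hlt
            rw [← hZsU j, min_eq_left hlt.le]
    have p2 : (∑ j ∈ Finset.univ.filter (fun j => ¬ util Zs j < lam), min (U j) lam) ≤
        ∑ j ∈ Finset.univ.filter (fun j => ¬ util Zs j < lam), min (Ustar j) lam := by
      refine Finset.sum_le_sum fun j hj => ?_
      have hge := not_lt.mp (Finset.mem_filter.mp hj).2
      have he : min (Ustar j) lam = lam := min_eq_right (by rw [hZsU j]; exact hge)
      rw [he]; exact min_le_right _ _
    linarith
  have htn : t - 1 < n := by omega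
  set lam := sortedVec U ⟨t-1, htn⟩ with hlam
  have hmonoU : Monotone (sortedVec U) := Tuple.monotone_sort U
  have hcardlt := es_card_filter (n := n) t ht2
  have hcardge : (Finset.univ.filter fun j : Fin n => ¬ (j:ℕ) < t).card = n - t := by
    have hsplit := Finset.card_filter_add_card_filter_not
      (s := (Finset.univ : Finset (Fin n))) (p := fun j : Fin n => (j:ℕ) < t)
    rw [Finset.card_univ, Fintype.card_fin] at hsplit
    omega
  have hperm : ∀ (V : Fin n → ℝ), (∑ j, min (sortedVec V j) lam) = ∑ j, min (V j) lam :=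
    fun V => Equiv.sum_comp (Tuple.sort V) (fun x => min (V x) lam)
  have hlorU : lorenzSum U t
      = ∑ j ∈ Finset.univ.filter (fun j : Fin n => (j:ℕ) < t), sortedVec U j := rfl
  have hlorV : lorenzSum Ustar t
      = ∑ j ∈ Finset.univ.filter (fun j : Fin n => (j:ℕ) < t), sortedVec Ustar j := rfl
  have hsplitU : (∑ j, min (sortedVec U j) lam)
      = lorenzSum U t + ((n - t : ℕ) : ℝ) * lam := by
    rw [← Finset.sum_filter_add_sum_filter_not Finset.univ (fun j : Fin n => (j:ℕ) < t)
        (fun j => min (sortedVec U j) lam)]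
    have hA : (∑ j ∈ Finset.univ.filter (fun j : Fin n => (j:ℕ) < t),
        min (sortedVec U j) lam) = lorenzSum U t := by
      rw [hlorU]
      refine Finset.sum_congr rfl fun j hj => ?_
      have hjt := (Finset.mem_filter.mp hj).2
      have hle : j ≤ (⟨t-1, htn⟩ : Fin n) := Fin.le_def.mpr (by simp; omega)
      exact min_eq_left (hmonoU hle)
    have hB : (∑ j ∈ Finset.univ.filter (fun j : Fin n => ¬ (j:ℕ) < t),
        min (sortedVec U j) lam) = ((n - t : ℕ) : ℝ) * lam := by
      have hc : ∀ j ∈ Finset.univ.filter (fun j : Fin n => ¬ (j:ℕ) < t),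
          min (sortedVec U j) lam = lam := by
        intro j hj
        have hjt := not_lt.mp (Finset.mem_filter.mp hj).2
        have hle : (⟨t-1, htn⟩ : Fin n) ≤ j := Fin.le_def.mpr (by simp; omega)
        exact min_eq_right (hmonoU hle)
      rw [Finset.sum_congr rfl hc, Finset.sum_const, hcardge, nsmul_eq_mul]
    rw [hA, hB]
  have hsplitV : (∑ j, min (sortedVec Ustar j) lam)
      ≤ lorenzSum Ustar t + ((n - t : ℕ) : ℝ) * lam := by
    rw [← Finset.sum_filter_add_sum_filter_not Finset.univ (fun j : Fin n => (j:ℕ) < t)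
        (fun j => min (sortedVec Ustar j) lam)]
    have hA : (∑ j ∈ Finset.univ.filter (fun j : Fin n => (j:ℕ) < t),
        min (sortedVec Ustar j) lam) ≤ lorenzSum Ustar t := by
      rw [hlorV]
      exact Finset.sum_le_sum fun j _ => min_le_left _ _
    have hB : (∑ j ∈ Finset.univ.filter (fun j : Fin n => ¬ (j:ℕ) < t),
        min (sortedVec Ustar j) lam) ≤ ((n - t : ℕ) : ℝ) * lam := by
      calc (∑ j ∈ Finset.univ.filter (fun j : Fin n => ¬ (j:ℕ) < t),
          min (sortedVec Ustar j) lam)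
          ≤ ∑ _j ∈ Finset.univ.filter (fun j : Fin n => ¬ (j:ℕ) < t), lam :=
            Finset.sum_le_sum fun j _ => min_le_right _ _
      _ = ((n - t : ℕ) : ℝ) * lam := by rw [Finset.sum_const, hcardge, nsmul_eq_mul]
    linarith
  have hchain : lorenzSum U t + ((n - t : ℕ) : ℝ) * lam
      ≤ lorenzSum Ustar t + ((n - t : ℕ) : ℝ) * lam := by
    calc lorenzSum U t + ((n - t : ℕ) : ℝ) * lam
        = ∑ j, min (sortedVec U j) lam := hsplitU.symm
    _ = ∑ j, min (U j) lam := hperm U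
    _ ≤ ∑ j, min (Ustar j) lam := claimA lam
    _ = ∑ j, min (sortedVec Ustar j) lam := (hperm Ustar).symm
    _ ≤ lorenzSum Ustar t + ((n - t : ℕ) : ℝ) * lam := hsplitV
  linarith
end

section
/- There exists a multi-unit assignment problem (R,q) such that for every constrained competitive equilibrium (Z*, p*) of (R,q), the utility profile (u_i(Z*))_{i∈N} differs from the egalitarian solution φ^ES(R,q). (A witness is the problem with 9 agents, 6 objects each of capacity 4, where agents a,b,c accept {α,β}, agent d accepts {β,γ,δ}, agent e accepts {β,ε,ζ}, and agents f,g,h,i accept {α,γ,δ,ε,ζ}.) -/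
open Finset

variable {n : ℕ} {M : Type*} [Fintype M]

section AuxES

@[simp] lemma fv6_2 : ((2:Fin 6):ℕ) = 2 := rfl
@[simp] lemma fv6_3 : ((3:Fin 6):ℕ) = 3 := rfl
@[simp] lemma fv6_4 : ((4:Fin 6):ℕ) = 4 := rfl
@[simp] lemma fv6_5 : ((5:Fin 6):ℕ) = 5 := rfl
@[simp] lemma fv9_2 : ((2:Fin 9):ℕ) = 2 := rfl
@[simp] lemma fv9_3 : ((3:Fin 9):ℕ) = 3 := rfl
@[simp] lemma fv9_4 : ((4:Fin 9):ℕ) = 4 := rfl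
@[simp] lemma fv9_5 : ((5:Fin 9):ℕ) = 5 := rfl
@[simp] lemma fv9_6 : ((6:Fin 9):ℕ) = 6 := rfl
@[simp] lemma fv9_7 : ((7:Fin 9):ℕ) = 7 := rfl
@[simp] lemma fv9_8 : ((8:Fin 9):ℕ) = 8 := rfl

lemma sum_univ_nine' {β : Type*} [AddCommMonoid β] (f : Fin 9 → β) :
    ∑ i, f i = f 0 + f 1 + f 2 + f 3 + f 4 + f 5 + f 6 + f 7 + f 8 := by
  rw [Fin.sum_univ_castSucc, Fin.sum_univ_eight]; rfl

lemma fin6_cases (k : Fin 6) : k = 0 ∨ k = 1 ∨ k = 2 ∨ k = 3 ∨ k = 4 ∨ k = 5 := by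
  have h := k.isLt
  have h' : (k:ℕ) = 0 ∨ (k:ℕ) = 1 ∨ (k:ℕ) = 2 ∨ (k:ℕ) = 3 ∨ (k:ℕ) = 4 ∨ (k:ℕ) = 5 := by omega
  rcases h' with h'|h'|h'|h'|h'|h'
  exacts [Or.inl (Fin.ext h'), Or.inr (Or.inl (Fin.ext h')),
    Or.inr (Or.inr (Or.inl (Fin.ext h'))), Or.inr (Or.inr (Or.inr (Or.inl (Fin.ext h')))),
    Or.inr (Or.inr (Or.inr (Or.inr (Or.inl (Fin.ext h'))))),
    Or.inr (Or.inr (Or.inr (Or.inr (Or.inr (Fin.ext h')))))]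

lemma fin9_cases (k : Fin 9) : k = 0 ∨ k = 1 ∨ k = 2 ∨ k = 3 ∨ k = 4 ∨ k = 5 ∨ k = 6 ∨
    k = 7 ∨ k = 8 := by
  have h := k.isLt
  have h' : (k:ℕ) = 0 ∨ (k:ℕ) = 1 ∨ (k:ℕ) = 2 ∨ (k:ℕ) = 3 ∨ (k:ℕ) = 4 ∨ (k:ℕ) = 5 ∨
      (k:ℕ) = 6 ∨ (k:ℕ) = 7 ∨ (k:ℕ) = 8 := by omega
  rcases h' with h'|h'|h'|h'|h'|h'|h'|h'|h'
  exacts [Or.inl (Fin.ext h'),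
    Or.inr (Or.inl (Fin.ext h')),
    Or.inr (Or.inr (Or.inl (Fin.ext h'))),
    Or.inr (Or.inr (Or.inr (Or.inl (Fin.ext h')))),
    Or.inr (Or.inr (Or.inr (Or.inr (Or.inl (Fin.ext h'))))),
    Or.inr (Or.inr (Or.inr (Or.inr (Or.inr (Or.inl (Fin.ext h')))))),
    Or.inr (Or.inr (Or.inr (Or.inr (Or.inr (Or.inr (Or.inl (Fin.ext h'))))))),
    Or.inr (Or.inr (Or.inr (Or.inr (Or.inr (Or.inr (Or.inr (Or.inl (Fin.ext h')))))))),
    Or.inr (Or.inr (Or.inr (Or.inr (Or.inr (Or.inr (Or.inr (Or.inr (Fin.ext h'))))))))]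

lemma sortedVec_mono' (U : Fin n → ℝ) : Monotone (sortedVec U) := Tuple.monotone_sort U

lemma sortedVec_le (U : Fin n → ℝ) (j : Fin n) (c : ℝ) (S : Finset (Fin n))
    (hcard : (j : ℕ) < S.card) (hS : ∀ i ∈ S, U i ≤ c) : sortedVec U j ≤ c := by
  set σ := Tuple.sort U with hσ
  set T := S.image σ.symm with hT
  have hTc : T.card = S.card := Finset.card_image_of_injective _ σ.symm.injective
  have hex : ∃ t ∈ T, j ≤ t := by
    by_contra h
    push_neg at h
    have hsub : T.image Fin.val ⊆ Finset.range (j : ℕ) := by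
      intro x hx
      simp only [Finset.mem_image] at hx
      obtain ⟨t, ht, rfl⟩ := hx
      simp only [Finset.mem_range]
      exact h t ht
    have := Finset.card_le_card hsub
    rw [Finset.card_image_of_injective _ Fin.val_injective, hTc, Finset.card_range] at this
    omega
  obtain ⟨t, ht, hjt⟩ := hex
  have h1 : sortedVec U j ≤ sortedVec U t := sortedVec_mono' U hjt
  obtain ⟨s, hs, rfl⟩ := Finset.mem_image.mp ht
  have h2 : sortedVec U (σ.symm s) = U s := by simp [sortedVec, hσ]
  rw [h2] at h1
  exact h1.trans (hS s hs)

lemma sortedVec_lt (U : Fin n → ℝ) (j : Fin n) (c : ℝ) (S : Finset (Fin n))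
    (hcard : (j : ℕ) < S.card) (hS : ∀ i ∈ S, U i < c) : sortedVec U j < c := by
  set σ := Tuple.sort U with hσ
  set T := S.image σ.symm with hT
  have hTc : T.card = S.card := Finset.card_image_of_injective _ σ.symm.injective
  have hex : ∃ t ∈ T, j ≤ t := by
    by_contra h
    push_neg at h
    have hsub : T.image Fin.val ⊆ Finset.range (j : ℕ) := by
      intro x hx
      simp only [Finset.mem_image] at hx
      obtain ⟨t, ht, rfl⟩ := hx
      simp only [Finset.mem_range]
      exact h t ht
    have := Finset.card_le_card hsub
    rw [Finset.card_image_of_injective _ Fin.val_injective, hTc, Finset.card_range] at this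
    omega
  obtain ⟨t, ht, hjt⟩ := hex
  have h1 : sortedVec U j ≤ sortedVec U t := sortedVec_mono' U hjt
  obtain ⟨s, hs, rfl⟩ := Finset.mem_image.mp ht
  have h2 : sortedVec U (σ.symm s) = U s := by simp [sortedVec, hσ]
  rw [h2] at h1
  exact h1.trans_lt (hS s hs)

lemma sortedVec_zero_le {m : ℕ} (U : Fin (m+1) → ℝ) (i : Fin (m+1)) : sortedVec U 0 ≤ U i := by
  have h2 : sortedVec U ((Tuple.sort U).symm i) = U i := by simp [sortedVec]
  rw [← h2]
  exact sortedVec_mono' U (Fin.zero_le _)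

lemma sortedVec_eq_self (U : Fin n → ℝ) (h : Monotone U) : sortedVec U = U := by
  have := (Tuple.comp_sort_eq_comp_iff_monotone (f := U) (σ := Equiv.refl _)).mpr (by simpa using h)
  simpa [sortedVec] using this.symm

lemma budget_binds [DecidableEq M] (P : MAP n M) (Z : Fin n → M → ℝ)
    (p : M → ℝ) (hp : ∀ k, 0 ≤ p k) (i : Fin n)
    (hb : InBudget P p i (Z i)) (hopt : ∀ z, InBudget P p i z → (∑ k, z k) ≤ util Z i)
    (k : M) (hk : P.r i k = true) (hlt : Z i k < 1) : ∑ j, p j * Z i j = 1 := by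
  obtain ⟨hz0, hz1, hsupp, hcost⟩ := hb
  by_contra hne
  have hc : ∑ j, p j * Z i j < 1 := lt_of_le_of_ne hcost hne
  have hpk1 : (0:ℝ) < p k + 1 := by linarith [hp k]
  set c := ∑ j, p j * Z i j with hcdef
  set ε := min (1 - Z i k) ((1 - c)/(p k + 1)) with hεdef
  have hε0 : 0 < ε := lt_min (by linarith) (div_pos (by linarith) hpk1)
  have hε1 : ε ≤ 1 - Z i k := min_le_left _ _
  have hε2 : ε ≤ (1 - c)/(p k + 1) := min_le_right _ _
  set z' := fun j => Z i j + if j = k then ε else 0 with hz'def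
  have hcost' : ∑ j, p j * z' j = c + p k * ε := by
    simp only [hz'def, mul_add, mul_ite, mul_zero]
    rw [Finset.sum_add_distrib, Finset.sum_ite_eq' Finset.univ k (fun j => p j * ε)]
    simp [hcdef]
  have hb' : InBudget P p i z' := by
    refine ⟨fun j => ?_, fun j => ?_, fun j hj => ?_, ?_⟩
    · simp only [hz'def]
      split_ifs <;> [linarith [hz0 j]; linarith [hz0 j]]
    · simp only [hz'def]
      split_ifs with h
      · subst h; linarith
      · linarith [hz1 j]
    · simp only [hz'def] at hj
      by_cases h : j = k
      · subst h; exact hk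
      · simp only [h, if_false, add_zero] at hj
        exact hsupp j hj
    · rw [hcost']
      have h2 : p k * ε ≤ p k * ((1 - c)/(p k + 1)) := mul_le_mul_of_nonneg_left hε2 (hp k)
      have h3 : p k * ((1 - c)/(p k + 1)) < 1 - c := by
        rw [mul_div_assoc'] at *
        rw [div_lt_iff₀ hpk1]
        nlinarith [hp k]
      linarith
  have hle := hopt z' hb'
  have hsz : ∑ j, z' j = util Z i + ε := by
    simp only [hz'def]
    rw [Finset.sum_add_distrib, Finset.sum_ite_eq' Finset.univ k (fun _ => ε)]
    simp [util]
  rw [hsz] at hle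
  linarith

def Pr : Fin 9 → Fin 6 → Bool :=
  ![![true,true,false,false,false,false],
    ![true,true,false,false,false,false],
    ![true,true,false,false,false,false],
    ![false,true,true,true,false,false],
    ![false,true,false,false,true,true],
    ![true,false,true,true,true,true],
    ![true,false,true,true,true,true],
    ![true,false,true,true,true,true],
    ![true,false,true,true,true,true]]

def P0 : MAP 9 (Fin 6) where
  r := Pr
  q := fun _ => 4
  q_pos := fun _ => by norm_num
  enough := by decide

noncomputable def U0 : Fin 9 → ℝ := fun i =>
  if i.val < 3 then 2 else if i.val < 5 then 5/2 else 13/4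

noncomputable def Z0 : Fin 9 → Fin 6 → ℝ := fun i k =>
  if i.val < 3 then (if k.val < 2 then 1 else 0)
  else if i.val = 3 then (if k.val = 1 then 1/2 else if k.val = 2 ∨ k.val = 3 then 1 else 0)
  else if i.val = 4 then (if k.val = 1 then 1/2 else if 4 ≤ k.val then 1 else 0)
  else (if k.val = 0 then 1/4 else if k.val = 1 then 0 else 3/4)

lemma utilZ0 : ∀ i, util Z0 i = U0 i := by
  intro i
  fin_cases i <;>
    · simp only [util, Z0, U0, Fin.sum_univ_six]
      norm_num

lemma U0_mem : U0 ∈ effU P0 := by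
  refine ⟨Z0, ⟨?_, ?_, ?_, ?_⟩, ?_, fun i => (utilZ0 i).symm⟩
  · intro i k; fin_cases i <;> fin_cases k <;> norm_num [Z0]
  · intro i k; fin_cases i <;> fin_cases k <;> norm_num [Z0]
  · intro k
    fin_cases k <;>
      · rw [sum_univ_nine']
        norm_num [Z0, P0]
  · intro i k h
    fin_cases i <;> fin_cases k <;> first | rfl | (norm_num [Z0] at h)
  · rw [sum_univ_nine']
    simp only [utilZ0]
    rw [Fin.sum_univ_six]
    norm_num [U0, P0]

lemma U0vals : U0 0 = 2 ∧ U0 1 = 2 ∧ U0 2 = 2 ∧ U0 3 = 5/2 ∧ U0 4 = 5/2 ∧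
    U0 5 = 13/4 ∧ U0 6 = 13/4 ∧ U0 7 = 13/4 ∧ U0 8 = 13/4 := by
  norm_num [U0]

lemma U0_mono : Monotone U0 := by
  intro a b hab
  have h : (a:ℕ) ≤ (b:ℕ) := hab
  simp only [U0]
  split_ifs <;> first | (exfalso; omega) | norm_num

end AuxES

section MainLemmas

set_option maxHeartbeats 1000000 in
lemma leximin_greatest : ∀ U' ∈ effU P0, leximinLE U' U0 := by
  intro U' hmem
  obtain ⟨Z, ⟨hz0, hz1, hcol, hsp⟩, hEff, hU'⟩ := hmem
  obtain ⟨hv0, hv1, hv2, hv3, hv4, hv5, hv6, hv7, hv8⟩ := U0vals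
  have hzero : ∀ i k, P0.r i k = false → Z i k = 0 := by
    intro i k hk
    by_contra hne
    have hpos : 0 < Z i k := lt_of_le_of_ne (hz0 i k) (Ne.symm hne)
    have h := hsp i k hpos
    rw [hk] at h
    exact absurd h (by simp)
  have e0 : util Z 0 = Z 0 0 + Z 0 1 := by
    rw [util, Fin.sum_univ_six, hzero 0 2 (by decide), hzero 0 3 (by decide),
      hzero 0 4 (by decide), hzero 0 5 (by decide)]
    ring
  have e1 : util Z 1 = Z 1 0 + Z 1 1 := by
    rw [util, Fin.sum_univ_six, hzero 1 2 (by decide), hzero 1 3 (by decide),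
      hzero 1 4 (by decide), hzero 1 5 (by decide)]
    ring
  have e2 : util Z 2 = Z 2 0 + Z 2 1 := by
    rw [util, Fin.sum_univ_six, hzero 2 2 (by decide), hzero 2 3 (by decide),
      hzero 2 4 (by decide), hzero 2 5 (by decide)]
    ring
  have e3 : util Z 3 = Z 3 1 + Z 3 2 + Z 3 3 := by
    rw [util, Fin.sum_univ_six, hzero 3 0 (by decide), hzero 3 4 (by decide),
      hzero 3 5 (by decide)]
    ring
  have e4 : util Z 4 = Z 4 1 + Z 4 4 + Z 4 5 := by
    rw [util, Fin.sum_univ_six, hzero 4 0 (by decide), hzero 4 2 (by decide),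
      hzero 4 3 (by decide)]
    ring
  have hsU0 : sortedVec U0 = U0 := sortedVec_eq_self U0 U0_mono
  show lexLE (sortedVec U') (sortedVec U0)
  rw [hsU0]
  have hu0le : util Z 0 ≤ 2 := by rw [e0]; linarith only [hz1 0 0, hz1 0 1]
  have hu1le : util Z 1 ≤ 2 := by rw [e1]; linarith only [hz1 1 0, hz1 1 1]
  have hu2le : util Z 2 ≤ 2 := by rw [e2]; linarith only [hz1 2 0, hz1 2 1]
  have hs0le : sortedVec U' 0 ≤ 2 := by
    apply sortedVec_le U' 0 2 {0} (by decide)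
    intro i hi
    simp only [Finset.mem_singleton] at hi
    subst hi
    rw [hU' 0]; exact hu0le
  rcases hs0le.lt_or_eq with hlt | hs0
  · exact Or.inr ⟨0, by rw [hv0]; exact hlt,
      fun j hj => absurd (show (j:ℕ) < 0 from hj) (by omega)⟩
  · -- sortedVec U' 0 = 2
    have hge2 : ∀ i, (2:ℝ) ≤ util Z i := by
      intro i
      rw [← hU' i, ← hs0]
      exact sortedVec_zero_le U' i
    have hu0 : util Z 0 = 2 := le_antisymm hu0le (hge2 0)
    have hu1 : util Z 1 = 2 := le_antisymm hu1le (hge2 1)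
    have hu2 : util Z 2 = 2 := le_antisymm hu2le (hge2 2)
    have hZ01 : Z 0 1 = 1 := by rw [e0] at hu0; linarith only [hu0, hz1 0 0, hz1 0 1]
    have hZ11 : Z 1 1 = 1 := by rw [e1] at hu1; linarith only [hu1, hz1 1 0, hz1 1 1]
    have hZ21 : Z 2 1 = 1 := by rw [e2] at hu2; linarith only [hu2, hz1 2 0, hz1 2 1]
    have hq1 : ((P0.q 1 : ℕ) : ℝ) = 4 := by norm_num [P0]
    have hc1 : Z 3 1 + Z 4 1 ≤ 1 := by
      have h := hcol 1
      rw [sum_univ_nine', hzero 5 1 (by decide), hzero 6 1 (by decide), hzero 7 1 (by decide),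
        hzero 8 1 (by decide), hZ01, hZ11, hZ21, hq1] at h
      linarith only [h]
    have hde : util Z 3 + util Z 4 ≤ 5 := by
      rw [e3, e4]
      linarith only [hz1 3 2, hz1 3 3, hz1 4 4, hz1 4 5, hc1]
    have hs1 : sortedVec U' 1 = 2 := by
      refine le_antisymm ?_ ?_
      · apply sortedVec_le U' 1 2 {0, 1} (by decide)
        intro i hi
        simp only [Finset.mem_insert, Finset.mem_singleton] at hi
        rcases hi with rfl | rfl <;> simp only [hU', hu0, hu1] <;> norm_num
      · rw [← hs0]; exact sortedVec_mono' U' (by decide)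
    have hs2 : sortedVec U' 2 = 2 := by
      refine le_antisymm ?_ ?_
      · apply sortedVec_le U' 2 2 {0, 1, 2} (by decide)
        intro i hi
        simp only [Finset.mem_insert, Finset.mem_singleton] at hi
        rcases hi with rfl | rfl | rfl <;> simp only [hU', hu0, hu1, hu2] <;> norm_num
      · rw [← hs0]; exact sortedVec_mono' U' (by decide)
    have hmin : util Z 3 ≤ 5/2 ∨ util Z 4 ≤ 5/2 := by
      by_contra hcon
      push_neg at hcon
      linarith only [hcon.1, hcon.2, hde]
    have hs3le : sortedVec U' 3 ≤ 5/2 := by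
      rcases hmin with hm | hm
      · apply sortedVec_le U' 3 (5/2) {0,1,2,3} (by decide)
        intro i hi
        simp only [Finset.mem_insert, Finset.mem_singleton] at hi
        rcases hi with rfl|rfl|rfl|rfl <;> simp only [hU', hu0, hu1, hu2] <;>
          first | exact hm | norm_num
      · apply sortedVec_le U' 3 (5/2) {0,1,2,4} (by decide)
        intro i hi
        simp only [Finset.mem_insert, Finset.mem_singleton] at hi
        rcases hi with rfl|rfl|rfl|rfl <;> simp only [hU', hu0, hu1, hu2] <;>
          first | exact hm | norm_num
    rcases hs3le.lt_or_eq with hlt | hs3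
    · refine Or.inr ⟨3, by rw [hv3]; exact hlt, ?_⟩
      intro j hj
      have hjv : (j:ℕ) < 3 := hj
      have hcase : (j:ℕ) = 0 ∨ (j:ℕ) = 1 ∨ (j:ℕ) = 2 := by omega
      rcases hcase with h|h|h
      · have hjE : j = 0 := Fin.ext h; subst hjE; rw [hv0]; exact hs0
      · have hjE : j = 1 := Fin.ext h; subst hjE; rw [hv1]; exact hs1
      · have hjE : j = 2 := Fin.ext h; subst hjE; rw [hv2]; exact hs2
    · -- sortedVec U' 3 = 5/2
      have key : ∀ j : Fin 9, j ∉ ({0,1,2} : Finset (Fin 9)) → ¬ (util Z j < 5/2) := by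
        intro j hj hlt
        have hcard : ((3:Fin 9):ℕ) < (insert j {0,1,2} : Finset (Fin 9)).card := by
          rw [Finset.card_insert_of_notMem hj,
            show ({0,1,2} : Finset (Fin 9)).card = 3 from by decide]
          norm_num
        have hcon := sortedVec_lt U' 3 (5/2) (insert j {0,1,2}) hcard (by
          intro i hi
          rcases Finset.mem_insert.mp hi with rfl | hi'
          · simp only [hU']; exact hlt
          · simp only [Finset.mem_insert, Finset.mem_singleton] at hi'
            rcases hi' with rfl|rfl|rfl <;> simp only [hU', hu0, hu1, hu2] <;> norm_num)
        rw [hs3] at hcon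
        exact lt_irrefl _ hcon
      have h3ge : 5/2 ≤ util Z 3 := not_lt.mp (key 3 (by decide))
      have h4ge : 5/2 ≤ util Z 4 := not_lt.mp (key 4 (by decide))
      have hu3 : util Z 3 = 5/2 := by linarith only [h3ge, h4ge, hde]
      have hu4 : util Z 4 = 5/2 := by linarith only [h3ge, h4ge, hde]
      have hq24 : (∑ k, ((P0.q k : ℕ):ℝ)) = 24 := by
        rw [Fin.sum_univ_six]
        norm_num [P0]
      have hsum58 : util Z 5 + util Z 6 + util Z 7 + util Z 8 = 13 := by
        rw [sum_univ_nine', hq24] at hEff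
        linarith only [hEff, hu0, hu1, hu2, hu3, hu4]
      have hs4 : sortedVec U' 4 = 5/2 := by
        refine le_antisymm ?_ ?_
        · apply sortedVec_le U' 4 (5/2) {0,1,2,3,4} (by decide)
          intro i hi
          simp only [Finset.mem_insert, Finset.mem_singleton] at hi
          rcases hi with rfl|rfl|rfl|rfl|rfl <;>
            simp only [hU', hu0, hu1, hu2, hu3, hu4] <;> norm_num
        · rw [← hs3]; exact sortedVec_mono' U' (by decide)
      have hmin58 : util Z 5 ≤ 13/4 ∨ util Z 6 ≤ 13/4 ∨ util Z 7 ≤ 13/4 ∨ util Z 8 ≤ 13/4 := by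
        by_contra hcon
        push_neg at hcon
        obtain ⟨ha, hb, hc, hd⟩ := hcon
        linarith only [ha, hb, hc, hd, hsum58]
      have hs5le : sortedVec U' 5 ≤ 13/4 := by
        rcases hmin58 with hm|hm|hm|hm
        · apply sortedVec_le U' 5 (13/4) {0,1,2,3,4,5} (by decide)
          intro i hi
          simp only [Finset.mem_insert, Finset.mem_singleton] at hi
          rcases hi with rfl|rfl|rfl|rfl|rfl|rfl <;>
            simp only [hU', hu0, hu1, hu2, hu3, hu4] <;> first | exact hm | norm_num
        · apply sortedVec_le U' 5 (13/4) {0,1,2,3,4,6} (by decide)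
          intro i hi
          simp only [Finset.mem_insert, Finset.mem_singleton] at hi
          rcases hi with rfl|rfl|rfl|rfl|rfl|rfl <;>
            simp only [hU', hu0, hu1, hu2, hu3, hu4] <;> first | exact hm | norm_num
        · apply sortedVec_le U' 5 (13/4) {0,1,2,3,4,7} (by decide)
          intro i hi
          simp only [Finset.mem_insert, Finset.mem_singleton] at hi
          rcases hi with rfl|rfl|rfl|rfl|rfl|rfl <;>
            simp only [hU', hu0, hu1, hu2, hu3, hu4] <;> first | exact hm | norm_num
        · apply sortedVec_le U' 5 (13/4) {0,1,2,3,4,8} (by decide)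
          intro i hi
          simp only [Finset.mem_insert, Finset.mem_singleton] at hi
          rcases hi with rfl|rfl|rfl|rfl|rfl|rfl <;>
            simp only [hU', hu0, hu1, hu2, hu3, hu4] <;> first | exact hm | norm_num
      rcases hs5le.lt_or_eq with hlt | hs5
      · refine Or.inr ⟨5, by rw [hv5]; exact hlt, ?_⟩
        intro j hj
        have hjv : (j:ℕ) < 5 := hj
        have hcase : (j:ℕ) = 0 ∨ (j:ℕ) = 1 ∨ (j:ℕ) = 2 ∨ (j:ℕ) = 3 ∨ (j:ℕ) = 4 := by omega
        rcases hcase with h|h|h|h|h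
        · have hjE : j = 0 := Fin.ext h; subst hjE; rw [hv0]; exact hs0
        · have hjE : j = 1 := Fin.ext h; subst hjE; rw [hv1]; exact hs1
        · have hjE : j = 2 := Fin.ext h; subst hjE; rw [hv2]; exact hs2
        · have hjE : j = 3 := Fin.ext h; subst hjE; rw [hv3]; exact hs3
        · have hjE : j = 4 := Fin.ext h; subst hjE; rw [hv4]; exact hs4
      · -- sortedVec U' 5 = 13/4
        have key2 : ∀ j : Fin 9, j ∉ ({0,1,2,3,4} : Finset (Fin 9)) → ¬ (util Z j < 13/4) := by
          intro j hj hlt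
          have hcard : ((5:Fin 9):ℕ) < (insert j {0,1,2,3,4} : Finset (Fin 9)).card := by
            rw [Finset.card_insert_of_notMem hj,
              show ({0,1,2,3,4} : Finset (Fin 9)).card = 5 from by decide]
            norm_num
          have hcon := sortedVec_lt U' 5 (13/4) (insert j {0,1,2,3,4}) hcard (by
            intro i hi
            rcases Finset.mem_insert.mp hi with rfl | hi'
            · simp only [hU']; exact hlt
            · simp only [Finset.mem_insert, Finset.mem_singleton] at hi'
              rcases hi' with rfl|rfl|rfl|rfl|rfl <;>
                simp only [hU', hu0, hu1, hu2, hu3, hu4] <;> norm_num)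
          rw [hs5] at hcon
          exact lt_irrefl _ hcon
        have h5ge : 13/4 ≤ util Z 5 := not_lt.mp (key2 5 (by decide))
        have h6ge : 13/4 ≤ util Z 6 := not_lt.mp (key2 6 (by decide))
        have h7ge : 13/4 ≤ util Z 7 := not_lt.mp (key2 7 (by decide))
        have h8ge : 13/4 ≤ util Z 8 := not_lt.mp (key2 8 (by decide))
        have hu5 : util Z 5 = 13/4 := by linarith only [h5ge, h6ge, h7ge, h8ge, hsum58]
        have hu6 : util Z 6 = 13/4 := by linarith only [h5ge, h6ge, h7ge, h8ge, hsum58]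
        have hu7 : util Z 7 = 13/4 := by linarith only [h5ge, h6ge, h7ge, h8ge, hsum58]
        have hu8 : util Z 8 = 13/4 := by linarith only [h5ge, h6ge, h7ge, h8ge, hsum58]
        have hall : ∀ i ∈ (Finset.univ : Finset (Fin 9)), U' i ≤ 13/4 := by
          intro i _
          rcases fin9_cases i with rfl|rfl|rfl|rfl|rfl|rfl|rfl|rfl|rfl <;>
            simp only [hU', hu0, hu1, hu2, hu3, hu4, hu5, hu6, hu7, hu8] <;> norm_num
        have hs6 : sortedVec U' 6 = 13/4 := by
          refine le_antisymm (sortedVec_le U' 6 (13/4) Finset.univ (by decide) hall) ?_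
          rw [← hs5]; exact sortedVec_mono' U' (by decide)
        have hs7 : sortedVec U' 7 = 13/4 := by
          refine le_antisymm (sortedVec_le U' 7 (13/4) Finset.univ (by decide) hall) ?_
          rw [← hs5]; exact sortedVec_mono' U' (by decide)
        have hs8 : sortedVec U' 8 = 13/4 := by
          refine le_antisymm (sortedVec_le U' 8 (13/4) Finset.univ (by decide) hall) ?_
          rw [← hs5]; exact sortedVec_mono' U' (by decide)
        refine Or.inl (funext fun j => ?_)
        rcases fin9_cases j with rfl|rfl|rfl|rfl|rfl|rfl|rfl|rfl|rfl
        · rw [hv0]; exact hs0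
        · rw [hv1]; exact hs1
        · rw [hv2]; exact hs2
        · rw [hv3]; exact hs3
        · rw [hv4]; exact hs4
        · rw [hv5]; exact hs5
        · rw [hv6]; exact hs6
        · rw [hv7]; exact hs7
        · rw [hv8]; exact hs8

end MainLemmas

section CCEContra

set_option maxHeartbeats 1000000 in
lemma cce_contra (Z : Fin 9 → Fin 6 → ℝ) (p : Fin 6 → ℝ) (hCCE : IsCCE P0 Z p)
    (heq : (fun i => util Z i) = U0) : False := by
  obtain ⟨⟨hz0, hz1, hcol, hsp⟩, hp, hopt⟩ := hCCE
  have hu : ∀ i, util Z i = U0 i := fun i => congrFun heq i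
  have hzero : ∀ i k, P0.r i k = false → Z i k = 0 := by
    intro i k hk
    by_contra hne
    have hpos : 0 < Z i k := lt_of_le_of_ne (hz0 i k) (Ne.symm hne)
    have h := hsp i k hpos
    rw [hk] at h
    exact absurd h (by simp)
  have hu0 : util Z 0 = 2 := by rw [hu 0]; norm_num [U0]
  have hu1 : util Z 1 = 2 := by rw [hu 1]; norm_num [U0]
  have hu2 : util Z 2 = 2 := by rw [hu 2]; norm_num [U0]
  have hu3 : util Z 3 = 5/2 := by rw [hu 3]; norm_num [U0]
  have hu4 : util Z 4 = 5/2 := by rw [hu 4]; norm_num [U0]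
  have hu5 : util Z 5 = 13/4 := by rw [hu 5]; norm_num [U0]
  have hu6 : util Z 6 = 13/4 := by rw [hu 6]; norm_num [U0]
  have hu7 : util Z 7 = 13/4 := by rw [hu 7]; norm_num [U0]
  have hu8 : util Z 8 = 13/4 := by rw [hu 8]; norm_num [U0]
  have e0 : util Z 0 = Z 0 0 + Z 0 1 := by
    rw [util, Fin.sum_univ_six, hzero 0 2 (by decide), hzero 0 3 (by decide),
      hzero 0 4 (by decide), hzero 0 5 (by decide)]
    ring
  have e1 : util Z 1 = Z 1 0 + Z 1 1 := by
    rw [util, Fin.sum_univ_six, hzero 1 2 (by decide), hzero 1 3 (by decide),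
      hzero 1 4 (by decide), hzero 1 5 (by decide)]
    ring
  have e2 : util Z 2 = Z 2 0 + Z 2 1 := by
    rw [util, Fin.sum_univ_six, hzero 2 2 (by decide), hzero 2 3 (by decide),
      hzero 2 4 (by decide), hzero 2 5 (by decide)]
    ring
  have e3 : util Z 3 = Z 3 1 + Z 3 2 + Z 3 3 := by
    rw [util, Fin.sum_univ_six, hzero 3 0 (by decide), hzero 3 4 (by decide),
      hzero 3 5 (by decide)]
    ring
  have e4 : util Z 4 = Z 4 1 + Z 4 4 + Z 4 5 := by
    rw [util, Fin.sum_univ_six, hzero 4 0 (by decide), hzero 4 2 (by decide),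
      hzero 4 3 (by decide)]
    ring
  have e5 : util Z 5 = Z 5 0 + Z 5 2 + Z 5 3 + Z 5 4 + Z 5 5 := by
    rw [util, Fin.sum_univ_six, hzero 5 1 (by decide)]
    ring
  have e6 : util Z 6 = Z 6 0 + Z 6 2 + Z 6 3 + Z 6 4 + Z 6 5 := by
    rw [util, Fin.sum_univ_six, hzero 6 1 (by decide)]
    ring
  have e7 : util Z 7 = Z 7 0 + Z 7 2 + Z 7 3 + Z 7 4 + Z 7 5 := by
    rw [util, Fin.sum_univ_six, hzero 7 1 (by decide)]
    ring
  have e8 : util Z 8 = Z 8 0 + Z 8 2 + Z 8 3 + Z 8 4 + Z 8 5 := by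
    rw [util, Fin.sum_univ_six, hzero 8 1 (by decide)]
    ring
  -- abc get full units
  have hZ00 : Z 0 0 = 1 := by rw [e0] at hu0; linarith only [hu0, hz1 0 0, hz1 0 1]
  have hZ01 : Z 0 1 = 1 := by rw [e0] at hu0; linarith only [hu0, hz1 0 0, hz1 0 1]
  have hZ10 : Z 1 0 = 1 := by rw [e1] at hu1; linarith only [hu1, hz1 1 0, hz1 1 1]
  have hZ11 : Z 1 1 = 1 := by rw [e1] at hu1; linarith only [hu1, hz1 1 0, hz1 1 1]
  have hZ20 : Z 2 0 = 1 := by rw [e2] at hu2; linarith only [hu2, hz1 2 0, hz1 2 1]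
  have hZ21 : Z 2 1 = 1 := by rw [e2] at hu2; linarith only [hu2, hz1 2 0, hz1 2 1]
  -- the β column
  have hq : ∀ k, ((P0.q k : ℕ) : ℝ) = 4 := fun k => by norm_num [P0]
  have hc1 : Z 3 1 + Z 4 1 ≤ 1 := by
    have h := hcol 1
    rw [sum_univ_nine', hzero 5 1 (by decide), hzero 6 1 (by decide), hzero 7 1 (by decide),
      hzero 8 1 (by decide), hZ01, hZ11, hZ21, hq 1] at h
    linarith only [h]
  have h3sum : Z 3 1 + Z 3 2 + Z 3 3 = 5/2 := by rw [← e3]; exact hu3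
  have h4sum : Z 4 1 + Z 4 4 + Z 4 5 = 5/2 := by rw [← e4]; exact hu4
  have hZ31ge : 1/2 ≤ Z 3 1 := by linarith only [h3sum, hz1 3 2, hz1 3 3]
  have hZ41ge : 1/2 ≤ Z 4 1 := by linarith only [h4sum, hz1 4 4, hz1 4 5]
  have hZ31 : Z 3 1 = 1/2 := by linarith only [hZ31ge, hZ41ge, hc1]
  have hZ41 : Z 4 1 = 1/2 := by linarith only [hZ31ge, hZ41ge, hc1]
  have hZ32 : Z 3 2 = 1 := by linarith only [h3sum, hZ31, hz1 3 2, hz1 3 3]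
  have hZ33 : Z 3 3 = 1 := by linarith only [h3sum, hZ31, hz1 3 2, hz1 3 3]
  have hZ44 : Z 4 4 = 1 := by linarith only [h4sum, hZ41, hz1 4 4, hz1 4 5]
  have hZ45 : Z 4 5 = 1 := by linarith only [h4sum, hZ41, hz1 4 4, hz1 4 5]
  -- budget of agent 0
  have c0 : p 0 + p 1 ≤ 1 := by
    have h := (hopt 0).1.2.2.2
    rw [Fin.sum_univ_six, hzero 0 2 (by decide), hzero 0 3 (by decide),
      hzero 0 4 (by decide), hzero 0 5 (by decide), hZ00, hZ01] at h
    linarith only [h]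
  -- budgets of d and e bind
  have cost3 : ∑ j, p j * Z 3 j = 1 :=
    budget_binds P0 Z p hp 3 (hopt 3).1 (hopt 3).2 1 (by decide) (by rw [hZ31]; norm_num)
  have cost4 : ∑ j, p j * Z 4 j = 1 :=
    budget_binds P0 Z p hp 4 (hopt 4).1 (hopt 4).2 1 (by decide) (by rw [hZ41]; norm_num)
  rw [Fin.sum_univ_six, hzero 3 0 (by decide), hzero 3 4 (by decide), hzero 3 5 (by decide),
    hZ31, hZ32, hZ33] at cost3
  rw [Fin.sum_univ_six, hzero 4 0 (by decide), hzero 4 2 (by decide), hzero 4 3 (by decide),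
    hZ41, hZ44, hZ45] at cost4
  -- columns for f,g,h,i
  have col0 : Z 5 0 + Z 6 0 + Z 7 0 + Z 8 0 ≤ 1 := by
    have h := hcol 0
    rw [sum_univ_nine', hzero 3 0 (by decide), hzero 4 0 (by decide),
      hZ00, hZ10, hZ20, hq 0] at h
    linarith only [h]
  have col2 : Z 5 2 + Z 6 2 + Z 7 2 + Z 8 2 ≤ 3 := by
    have h := hcol 2
    rw [sum_univ_nine', hzero 0 2 (by decide), hzero 1 2 (by decide), hzero 2 2 (by decide),
      hzero 4 2 (by decide), hZ32, hq 2] at h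
    linarith only [h]
  have col3 : Z 5 3 + Z 6 3 + Z 7 3 + Z 8 3 ≤ 3 := by
    have h := hcol 3
    rw [sum_univ_nine', hzero 0 3 (by decide), hzero 1 3 (by decide), hzero 2 3 (by decide),
      hzero 4 3 (by decide), hZ33, hq 3] at h
    linarith only [h]
  have col4 : Z 5 4 + Z 6 4 + Z 7 4 + Z 8 4 ≤ 3 := by
    have h := hcol 4
    rw [sum_univ_nine', hzero 0 4 (by decide), hzero 1 4 (by decide), hzero 2 4 (by decide),
      hzero 3 4 (by decide), hZ44, hq 4] at h
    linarith only [h]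
  have col5 : Z 5 5 + Z 6 5 + Z 7 5 + Z 8 5 ≤ 3 := by
    have h := hcol 5
    rw [sum_univ_nine', hzero 0 5 (by decide), hzero 1 5 (by decide), hzero 2 5 (by decide),
      hzero 3 5 (by decide), hZ45, hq 5] at h
    linarith only [h]
  have hsumS : (Z 5 0 + Z 6 0 + Z 7 0 + Z 8 0) + (Z 5 2 + Z 6 2 + Z 7 2 + Z 8 2) +
      (Z 5 3 + Z 6 3 + Z 7 3 + Z 8 3) + (Z 5 4 + Z 6 4 + Z 7 4 + Z 8 4) +
      (Z 5 5 + Z 6 5 + Z 7 5 + Z 8 5) = 13 := by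
    have a5 := e5; have a6 := e6; have a7 := e7; have a8 := e8
    rw [hu5] at a5; rw [hu6] at a6; rw [hu7] at a7; rw [hu8] at a8
    linarith only [a5, a6, a7, a8]
  have hS0 : Z 5 0 + Z 6 0 + Z 7 0 + Z 8 0 = 1 := by linarith only [hsumS, col0, col2, col3, col4, col5]
  have hS2 : Z 5 2 + Z 6 2 + Z 7 2 + Z 8 2 = 3 := by linarith only [hsumS, col0, col2, col3, col4, col5]
  have hS3 : Z 5 3 + Z 6 3 + Z 7 3 + Z 8 3 = 3 := by linarith only [hsumS, col0, col2, col3, col4, col5]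
  have hS4 : Z 5 4 + Z 6 4 + Z 7 4 + Z 8 4 = 3 := by linarith only [hsumS, col0, col2, col3, col4, col5]
  have hS5 : Z 5 5 + Z 6 5 + Z 7 5 + Z 8 5 = 3 := by linarith only [hsumS, col0, col2, col3, col4, col5]
  -- budgets of f,g,h,i bind
  have bind5 : ∑ j, p j * Z 5 j = 1 := by
    have hex : Z 5 0 < 1 ∨ Z 5 2 < 1 ∨ Z 5 3 < 1 ∨ Z 5 4 < 1 ∨ Z 5 5 < 1 := by
      by_contra hcon
      push_neg at hcon
      obtain ⟨a, b, c, d, e⟩ := hcon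
      have := e5; rw [hu5] at this
      linarith only [this, a, b, c, d, e]
    rcases hex with h|h|h|h|h
    exacts [budget_binds P0 Z p hp 5 (hopt 5).1 (hopt 5).2 0 (by decide) h,
      budget_binds P0 Z p hp 5 (hopt 5).1 (hopt 5).2 2 (by decide) h,
      budget_binds P0 Z p hp 5 (hopt 5).1 (hopt 5).2 3 (by decide) h,
      budget_binds P0 Z p hp 5 (hopt 5).1 (hopt 5).2 4 (by decide) h,
      budget_binds P0 Z p hp 5 (hopt 5).1 (hopt 5).2 5 (by decide) h]
  have bind6 : ∑ j, p j * Z 6 j = 1 := by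
    have hex : Z 6 0 < 1 ∨ Z 6 2 < 1 ∨ Z 6 3 < 1 ∨ Z 6 4 < 1 ∨ Z 6 5 < 1 := by
      by_contra hcon
      push_neg at hcon
      obtain ⟨a, b, c, d, e⟩ := hcon
      have := e6; rw [hu6] at this
      linarith only [this, a, b, c, d, e]
    rcases hex with h|h|h|h|h
    exacts [budget_binds P0 Z p hp 6 (hopt 6).1 (hopt 6).2 0 (by decide) h,
      budget_binds P0 Z p hp 6 (hopt 6).1 (hopt 6).2 2 (by decide) h,
      budget_binds P0 Z p hp 6 (hopt 6).1 (hopt 6).2 3 (by decide) h,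
      budget_binds P0 Z p hp 6 (hopt 6).1 (hopt 6).2 4 (by decide) h,
      budget_binds P0 Z p hp 6 (hopt 6).1 (hopt 6).2 5 (by decide) h]
  have bind7 : ∑ j, p j * Z 7 j = 1 := by
    have hex : Z 7 0 < 1 ∨ Z 7 2 < 1 ∨ Z 7 3 < 1 ∨ Z 7 4 < 1 ∨ Z 7 5 < 1 := by
      by_contra hcon
      push_neg at hcon
      obtain ⟨a, b, c, d, e⟩ := hcon
      have := e7; rw [hu7] at this
      linarith only [this, a, b, c, d, e]
    rcases hex with h|h|h|h|h
    exacts [budget_binds P0 Z p hp 7 (hopt 7).1 (hopt 7).2 0 (by decide) h,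
      budget_binds P0 Z p hp 7 (hopt 7).1 (hopt 7).2 2 (by decide) h,
      budget_binds P0 Z p hp 7 (hopt 7).1 (hopt 7).2 3 (by decide) h,
      budget_binds P0 Z p hp 7 (hopt 7).1 (hopt 7).2 4 (by decide) h,
      budget_binds P0 Z p hp 7 (hopt 7).1 (hopt 7).2 5 (by decide) h]
  have bind8 : ∑ j, p j * Z 8 j = 1 := by
    have hex : Z 8 0 < 1 ∨ Z 8 2 < 1 ∨ Z 8 3 < 1 ∨ Z 8 4 < 1 ∨ Z 8 5 < 1 := by
      by_contra hcon
      push_neg at hcon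
      obtain ⟨a, b, c, d, e⟩ := hcon
      have := e8; rw [hu8] at this
      linarith only [this, a, b, c, d, e]
    rcases hex with h|h|h|h|h
    exacts [budget_binds P0 Z p hp 8 (hopt 8).1 (hopt 8).2 0 (by decide) h,
      budget_binds P0 Z p hp 8 (hopt 8).1 (hopt 8).2 2 (by decide) h,
      budget_binds P0 Z p hp 8 (hopt 8).1 (hopt 8).2 3 (by decide) h,
      budget_binds P0 Z p hp 8 (hopt 8).1 (hopt 8).2 4 (by decide) h,
      budget_binds P0 Z p hp 8 (hopt 8).1 (hopt 8).2 5 (by decide) h]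
  rw [Fin.sum_univ_six, hzero 5 1 (by decide)] at bind5
  rw [Fin.sum_univ_six, hzero 6 1 (by decide)] at bind6
  rw [Fin.sum_univ_six, hzero 7 1 (by decide)] at bind7
  rw [Fin.sum_univ_six, hzero 8 1 (by decide)] at bind8
  have hgrp : p 0 * (Z 5 0 + Z 6 0 + Z 7 0 + Z 8 0) + p 2 * (Z 5 2 + Z 6 2 + Z 7 2 + Z 8 2) +
      p 3 * (Z 5 3 + Z 6 3 + Z 7 3 + Z 8 3) + p 4 * (Z 5 4 + Z 6 4 + Z 7 4 + Z 8 4) +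
      p 5 * (Z 5 5 + Z 6 5 + Z 7 5 + Z 8 5) = 4 := by
    linarith only [bind5, bind6, bind7, bind8]
  rw [hS0, hS2, hS3, hS4, hS5] at hgrp
  -- hgrp : p 0 * 1 + p 2 * 3 + p 3 * 3 + p 4 * 3 + p 5 * 3 = 4
  rcases le_total (p 4) (p 5) with hpc | hpc
  · set zs : Fin 6 → ℝ := fun k =>
      if k.val = 0 ∨ k.val = 2 ∨ k.val = 3 then 1 else if k.val = 4 then 3/10 else 0 with hzs
    have hzb : InBudget P0 p 5 zs := by
      refine ⟨?_, ?_, ?_, ?_⟩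
      · intro k
        rcases fin6_cases k with rfl|rfl|rfl|rfl|rfl|rfl <;> norm_num [hzs, -Fin.val_eq_zero_iff]
      · intro k
        rcases fin6_cases k with rfl|rfl|rfl|rfl|rfl|rfl <;> norm_num [hzs, -Fin.val_eq_zero_iff]
      · intro k hk
        rcases fin6_cases k with rfl|rfl|rfl|rfl|rfl|rfl <;>
          first | decide | (norm_num [hzs] at hk)
      · rw [Fin.sum_univ_six]
        have hval : p 0 * zs 0 + p 1 * zs 1 + p 2 * zs 2 + p 3 * zs 3 + p 4 * zs 4 + p 5 * zs 5 =
            p 0 + p 2 + p 3 + p 4 * (3/10) := by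
          norm_num [hzs, -Fin.val_eq_zero_iff]
        rw [hval]
        linarith only [hp 0, hp 1, hp 2, hp 3, hp 4, hp 5, cost3, cost4, hgrp, c0, hpc]
    have hge := (hopt 5).2 zs hzb
    have hval2 : ∑ k, zs k = 33/10 := by
      rw [Fin.sum_univ_six]
      norm_num [hzs, -Fin.val_eq_zero_iff]
    rw [hval2, hu5] at hge
    linarith only [hge]
  · set zs : Fin 6 → ℝ := fun k =>
      if k.val = 0 ∨ k.val = 2 ∨ k.val = 3 then 1 else if k.val = 5 then 3/10 else 0 with hzs
    have hzb : InBudget P0 p 5 zs := by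
      refine ⟨?_, ?_, ?_, ?_⟩
      · intro k
        rcases fin6_cases k with rfl|rfl|rfl|rfl|rfl|rfl <;> norm_num [hzs, -Fin.val_eq_zero_iff]
      · intro k
        rcases fin6_cases k with rfl|rfl|rfl|rfl|rfl|rfl <;> norm_num [hzs, -Fin.val_eq_zero_iff]
      · intro k hk
        rcases fin6_cases k with rfl|rfl|rfl|rfl|rfl|rfl <;>
          first | decide | (norm_num [hzs] at hk)
      · rw [Fin.sum_univ_six]
        have hval : p 0 * zs 0 + p 1 * zs 1 + p 2 * zs 2 + p 3 * zs 3 + p 4 * zs 4 + p 5 * zs 5 =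
            p 0 + p 2 + p 3 + p 5 * (3/10) := by
          norm_num [hzs, -Fin.val_eq_zero_iff]
        rw [hval]
        linarith only [hp 0, hp 1, hp 2, hp 3, hp 4, hp 5, cost3, cost4, hgrp, c0, hpc]
    have hge := (hopt 5).2 zs hzb
    have hval2 : ∑ k, zs k = 33/10 := by
      rw [Fin.sum_univ_six]
      norm_num [hzs, -Fin.val_eq_zero_iff]
    rw [hval2, hu5] at hge
    linarith only [hge]

end CCEContra

/-- There exists a MAP whose egalitarian solution is not supported by
any constrained competitive equilibrium: every CCE utility profile differs from
`φ^ES(R,q)`. -/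
theorem es_cce_disjoint :
    ∃ (n m : ℕ) (P : MAP n (Fin m)) (U : Fin n → ℝ),
      LeximinMaximal P U ∧
      ∀ (Z : Fin n → Fin m → ℝ) (p : Fin m → ℝ), IsCCE P Z p →
        (fun i => util Z i) ≠ U := by
  refine ⟨9, 6, P0, U0, ⟨U0_mem, fun U' hU' _ => leximin_greatest U' hU'⟩, ?_⟩
  intro Z p hCCE heq
  exact cce_contra Z p hCCE heq
end

section
/- Every random assignment matrix can be decomposed into a convex combination of binary RAMs: for every MAP (R,q) and every Z ∈ F(R,q), there exist finitely many RAMs Z_1, …, Z_T ∈ F(R,q) whose entries all lie in {0,1}, and nonnegative weights λ_1, …, λ_T summing to 1, such that Z = Σ_{t=1}^T λ_t Z_t. -/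
open Finset

variable {n : ℕ} {M : Type*} [Fintype M]

section DecompAux

open Classical

/-- The set of fractional entries of `Z`. -/
noncomputable def fracSet (Z : Fin n → M → ℝ) : Finset (Fin n × M) :=
  Finset.univ.filter (fun p => Z p.1 p.2 ≠ 0 ∧ Z p.1 p.2 ≠ 1)

lemma mem_fracSet {Z : Fin n → M → ℝ} {p : Fin n × M} :
    p ∈ fracSet Z ↔ Z p.1 p.2 ≠ 0 ∧ Z p.1 p.2 ≠ 1 := by
  simp [fracSet]

/-- `Z` has a decomposition as convex combination of binary RAMs. -/
def HasDecomp (P : MAP n M) (Z : Fin n → M → ℝ) : Prop :=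
  ∃ (T : ℕ) (Zs : Fin T → Fin n → M → ℝ) (lam : Fin T → ℝ),
    (∀ t, IsRAM P (Zs t)) ∧
    (∀ t i k, Zs t i k = 0 ∨ Zs t i k = 1) ∧
    (∀ t, 0 ≤ lam t) ∧ (∑ t, lam t = 1) ∧
    (∀ i k, Z i k = ∑ t, lam t * Zs t i k)

lemma hasDecomp_of_binary (P : MAP n M) (Z : Fin n → M → ℝ) (hZ : IsRAM P Z)
    (hb : ∀ i k, Z i k = 0 ∨ Z i k = 1) : HasDecomp P Z :=
  ⟨1, (fun _ => Z), (fun _ => 1), fun _ => hZ, fun _ => hb,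
    fun _ => zero_le_one, by simp, fun i k => by simp⟩

lemma hasDecomp_combine (P : MAP n M) (Z A B : Fin n → M → ℝ) (c : ℝ)
    (hA : HasDecomp P A) (hB : HasDecomp P B) (hc0 : 0 ≤ c) (hc1 : c ≤ 1)
    (hZ : ∀ i k, Z i k = c * A i k + (1 - c) * B i k) : HasDecomp P Z := by
  obtain ⟨T₁, Zs₁, l₁, hr₁, hb₁, hl₁, hs₁, he₁⟩ := hA
  obtain ⟨T₂, Zs₂, l₂, hr₂, hb₂, hl₂, hs₂, he₂⟩ := hB
  refine ⟨T₁ + T₂, Fin.addCases Zs₁ Zs₂,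
    Fin.addCases (fun t => c * l₁ t) (fun t => (1 - c) * l₂ t), ?_, ?_, ?_, ?_, ?_⟩
  · intro t
    induction t using Fin.addCases with
    | left t => simpa using hr₁ t
    | right t => simpa using hr₂ t
  · intro t
    induction t using Fin.addCases with
    | left t => simpa using hb₁ t
    | right t => simpa using hb₂ t
  · intro t
    induction t using Fin.addCases with
    | left t => simpa using mul_nonneg hc0 (hl₁ t)
    | right t => simpa using mul_nonneg (by linarith) (hl₂ t)
  · rw [Fin.sum_univ_add]
    simp only [Fin.addCases_left, Fin.addCases_right, ← Finset.mul_sum, hs₁, hs₂]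
    ring
  · intro i k
    rw [hZ i k, he₁ i k, he₂ i k, Fin.sum_univ_add, Finset.mul_sum, Finset.mul_sum]
    congr 1 <;>
      exact Finset.sum_congr rfl fun x _ => by
        simp only [Fin.addCases_left, Fin.addCases_right]; ring

lemma decomp_step (P : MAP n M) (Z : Fin n → M → ℝ) (hZ : IsRAM P Z)
    (hne : (fracSet Z).Nonempty) :
    ∃ (A B : Fin n → M → ℝ) (c : ℝ), IsRAM P A ∧ IsRAM P B ∧
      (fracSet A).card < (fracSet Z).card ∧ (fracSet B).card < (fracSet Z).card ∧
      0 ≤ c ∧ c ≤ 1 ∧ ∀ i k, Z i k = c * A i k + (1 - c) * B i k := by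
  obtain ⟨⟨i, k⟩, hp⟩ := hne
  rw [mem_fracSet] at hp
  obtain ⟨hZ0, hZ1, hZq, hZr⟩ := hZ
  have hik0 : 0 < Z i k := lt_of_le_of_ne (hZ0 i k) (Ne.symm hp.1)
  have hik1 : Z i k < 1 := lt_of_le_of_ne (hZ1 i k) hp.2
  by_cases hEx : ∃ j, j ≠ i ∧ Z j k ≠ 0 ∧ Z j k ≠ 1
  · -- Case B: another fractional entry in the same column.
    obtain ⟨j, hji, hj0, hj1⟩ := hEx
    have hjk0 : 0 < Z j k := lt_of_le_of_ne (hZ0 j k) (Ne.symm hj0)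
    have hjk1 : Z j k < 1 := lt_of_le_of_ne (hZ1 j k) hj1
    set a : ℝ := min (1 - Z i k) (Z j k) with ha_def
    set b : ℝ := min (Z i k) (1 - Z j k) with hb_def
    have ha : 0 < a := lt_min (by linarith) hjk0
    have hb : 0 < b := lt_min hik0 (by linarith)
    have hab : 0 < a + b := by linarith
    set A : Fin n → M → ℝ := fun i' k' =>
      Z i' k' + (if i' = i ∧ k' = k then a else 0) - (if i' = j ∧ k' = k then a else 0)
      with hA_def
    set B : Fin n → M → ℝ := fun i' k' =>
      Z i' k' - (if i' = i ∧ k' = k then b else 0) + (if i' = j ∧ k' = k then b else 0)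
      with hB_def
    have hAik : A i k = Z i k + a := by simp [hA_def, hji.symm]
    have hAjk : A j k = Z j k - a := by simp [hA_def, hji]
    have hBik : B i k = Z i k - b := by simp [hB_def, hji.symm]
    have hBjk : B j k = Z j k + b := by simp [hB_def, hji]
    have hAoth : ∀ i' k', ¬(i' = i ∧ k' = k) → ¬(i' = j ∧ k' = k) → A i' k' = Z i' k' := by
      intro i' k' h1 h2; simp [hA_def, h1, h2]
    have hBoth : ∀ i' k', ¬(i' = i ∧ k' = k) → ¬(i' = j ∧ k' = k) → B i' k' = Z i' k' := by
      intro i' k' h1 h2; simp [hB_def, h1, h2]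
    have haZ : a ≤ 1 - Z i k := min_le_left _ _
    have haj : a ≤ Z j k := min_le_right _ _
    have hbZ : b ≤ Z i k := min_le_left _ _
    have hbj : b ≤ 1 - Z j k := min_le_right _ _
    have colA : ∀ k', ∑ i', A i' k' = ∑ i', Z i' k' := by
      intro k'
      simp only [hA_def]
      rw [Finset.sum_sub_distrib, Finset.sum_add_distrib]
      by_cases hk : k' = k
      · subst hk
        simp [Finset.sum_ite_eq']
      · simp [hk]
    have colB : ∀ k', ∑ i', B i' k' = ∑ i', Z i' k' := by
      intro k'
      simp only [hB_def]
      rw [Finset.sum_add_distrib, Finset.sum_sub_distrib]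
      by_cases hk : k' = k
      · subst hk
        simp [Finset.sum_ite_eq']
      · simp [hk]
    have hram : ∀ (W : Fin n → M → ℝ), W i k ∈ Set.Icc (0:ℝ) 1 → W j k ∈ Set.Icc (0:ℝ) 1 →
        W i k ≤ Z i k + 1 → W j k ≤ Z j k + 1 →
        (∀ i' k', ¬(i' = i ∧ k' = k) → ¬(i' = j ∧ k' = k) → W i' k' = Z i' k') →
        (∀ k', ∑ i', W i' k' = ∑ i', Z i' k') → IsRAM P W := by
      intro W hWi hWj _ _ hoth hcol
      refine ⟨?_, ?_, ?_, ?_⟩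
      · intro i' k'
        by_cases h1 : i' = i ∧ k' = k
        · obtain ⟨rfl, rfl⟩ := h1; exact hWi.1
        · by_cases h2 : i' = j ∧ k' = k
          · obtain ⟨rfl, rfl⟩ := h2; exact hWj.1
          · rw [hoth _ _ h1 h2]; exact hZ0 _ _
      · intro i' k'
        by_cases h1 : i' = i ∧ k' = k
        · obtain ⟨rfl, rfl⟩ := h1; exact hWi.2
        · by_cases h2 : i' = j ∧ k' = k
          · obtain ⟨rfl, rfl⟩ := h2; exact hWj.2
          · rw [hoth _ _ h1 h2]; exact hZ1 _ _
      · intro k'; rw [hcol k']; exact hZq k'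
      · intro i' k' hpos
        by_cases h1 : i' = i ∧ k' = k
        · obtain ⟨rfl, rfl⟩ := h1; exact hZr _ _ hik0
        · by_cases h2 : i' = j ∧ k' = k
          · obtain ⟨rfl, rfl⟩ := h2; exact hZr _ _ hjk0
          · rw [hoth _ _ h1 h2] at hpos; exact hZr _ _ hpos
    have hramA : IsRAM P A := by
      apply hram A
      · rw [hAik]; constructor <;> [linarith; linarith]
      · rw [hAjk]; constructor <;> [linarith; linarith]
      · rw [hAik]; linarith
      · rw [hAjk]; linarith
      · exact hAoth
      · exact colA
    have hramB : IsRAM P B := by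
      apply hram B
      · rw [hBik]; constructor <;> [linarith; linarith]
      · rw [hBjk]; constructor <;> [linarith; linarith]
      · rw [hBik]; linarith
      · rw [hBjk]; linarith
      · exact hBoth
      · exact colB
    have hsubA : fracSet A ⊆ fracSet Z := by
      intro ⟨i', k'⟩ hm
      rw [mem_fracSet] at hm ⊢
      by_cases h1 : i' = i ∧ k' = k
      · obtain ⟨rfl, rfl⟩ := h1; exact ⟨Ne.symm (ne_of_lt hik0), ne_of_lt hik1⟩
      · by_cases h2 : i' = j ∧ k' = k
        · obtain ⟨rfl, rfl⟩ := h2; exact ⟨Ne.symm (ne_of_lt hjk0), ne_of_lt hjk1⟩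
        · rwa [hAoth _ _ h1 h2] at hm
    have hsubB : fracSet B ⊆ fracSet Z := by
      intro ⟨i', k'⟩ hm
      rw [mem_fracSet] at hm ⊢
      by_cases h1 : i' = i ∧ k' = k
      · obtain ⟨rfl, rfl⟩ := h1; exact ⟨Ne.symm (ne_of_lt hik0), ne_of_lt hik1⟩
      · by_cases h2 : i' = j ∧ k' = k
        · obtain ⟨rfl, rfl⟩ := h2; exact ⟨Ne.symm (ne_of_lt hjk0), ne_of_lt hjk1⟩
        · rwa [hBoth _ _ h1 h2] at hm
    have hcardA : (fracSet A).card < (fracSet Z).card := by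
      apply Finset.card_lt_card
      rw [Finset.ssubset_iff_of_subset hsubA]
      rcases le_total (1 - Z i k) (Z j k) with h | h
      · refine ⟨(i, k), mem_fracSet.mpr ⟨Ne.symm (ne_of_lt hik0), ne_of_lt hik1⟩, ?_⟩
        rw [mem_fracSet]
        have : A i k = 1 := by rw [hAik, ha_def, min_eq_left h]; ring
        simp [this]
      · refine ⟨(j, k), mem_fracSet.mpr ⟨Ne.symm (ne_of_lt hjk0), ne_of_lt hjk1⟩, ?_⟩
        rw [mem_fracSet]
        have : A j k = 0 := by rw [hAjk, ha_def, min_eq_right h]; ring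
        simp [this]
    have hcardB : (fracSet B).card < (fracSet Z).card := by
      apply Finset.card_lt_card
      rw [Finset.ssubset_iff_of_subset hsubB]
      rcases le_total (Z i k) (1 - Z j k) with h | h
      · refine ⟨(i, k), mem_fracSet.mpr ⟨Ne.symm (ne_of_lt hik0), ne_of_lt hik1⟩, ?_⟩
        rw [mem_fracSet]
        have : B i k = 0 := by rw [hBik, hb_def, min_eq_left h]; ring
        simp [this]
      · refine ⟨(j, k), mem_fracSet.mpr ⟨Ne.symm (ne_of_lt hjk0), ne_of_lt hjk1⟩, ?_⟩
        rw [mem_fracSet]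
        have : B j k = 1 := by rw [hBjk, hb_def, min_eq_right h]; ring
        simp [this]
    refine ⟨A, B, b / (a + b), hramA, hramB, hcardA, hcardB, ?_, ?_, ?_⟩
    · positivity
    · rw [div_le_one hab]; linarith
    · intro i' k'
      have key : ∀ s z : ℝ, z = b / (a + b) * (z + s * a) + (1 - b / (a + b)) * (z - s * b) := by
        intro s z
        field_simp
        ring
      by_cases h1 : i' = i ∧ k' = k
      · obtain ⟨rfl, rfl⟩ := h1
        rw [hAik, hBik]
        have := key 1 (Z i' k'); simpa using this
      · by_cases h2 : i' = j ∧ k' = k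
        · obtain ⟨rfl, rfl⟩ := h2
          rw [hAjk, hBjk]
          have := key (-1) (Z i' k'); simpa [← sub_eq_add_neg] using this
        · rw [hAoth _ _ h1 h2, hBoth _ _ h1 h2]
          have := key 0 (Z i' k'); simpa using this
  · -- Case A: `(i,k)` is the only fractional entry in column `k`.
    push_neg at hEx
    have hbin : ∀ j, j ≠ i → Z j k = 0 ∨ Z j k = 1 := by
      intro j hj
      by_contra h
      push_neg at h
      exact h.2 (hEx j hj h.1)
    set A : Fin n → M → ℝ := fun i' k' => if i' = i ∧ k' = k then 1 else Z i' k' with hA_def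
    set B : Fin n → M → ℝ := fun i' k' => if i' = i ∧ k' = k then 0 else Z i' k' with hB_def
    have hAik : A i k = 1 := by simp [hA_def]
    have hBik : B i k = 0 := by simp [hB_def]
    have hAoth : ∀ i' k', ¬(i' = i ∧ k' = k) → A i' k' = Z i' k' := by
      intro i' k' h1; simp [hA_def, h1]
    have hBoth : ∀ i' k', ¬(i' = i ∧ k' = k) → B i' k' = Z i' k' := by
      intro i' k' h1; simp [hB_def, h1]
    -- the other entries of column k sum to a natural number m
    set m : ℕ := ((Finset.univ.erase i).filter (fun j => Z j k = 1)).card with hm_def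
    have hsum_erase : ∑ j ∈ Finset.univ.erase i, Z j k = (m : ℝ) := by
      rw [hm_def]
      rw [← Finset.sum_boole]
      apply Finset.sum_congr rfl
      intro j hj
      rcases hbin j (Finset.ne_of_mem_erase hj) with h | h
      · simp [h]
      · simp [h]
    have hcol_split : ∑ i', Z i' k = Z i k + (m : ℝ) := by
      rw [← hsum_erase]
      exact (Finset.add_sum_erase Finset.univ (fun j => Z j k) (Finset.mem_univ i)).symm
    have hmq : (m : ℝ) + 1 ≤ (P.q k : ℝ) := by
      have h1 : (m : ℝ) < (P.q k : ℝ) := by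
        have := hZq k; rw [hcol_split] at this; linarith
      have h2 : m < P.q k := by exact_mod_cast h1
      exact_mod_cast h2
    have hcolA : ∑ i', A i' k = (m : ℝ) + 1 := by
      have hsplit : ∑ i', A i' k = A i k + ∑ j ∈ Finset.univ.erase i, A j k :=
        (Finset.add_sum_erase Finset.univ (fun j => A j k) (Finset.mem_univ i)).symm
      rw [hsplit, hAik]
      have : ∑ j ∈ Finset.univ.erase i, A j k = ∑ j ∈ Finset.univ.erase i, Z j k := by
        apply Finset.sum_congr rfl
        intro j hj
        exact hAoth j k (fun h => (Finset.ne_of_mem_erase hj) h.1)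
      rw [this, hsum_erase]; ring
    have hcolB : ∑ i', B i' k = (m : ℝ) := by
      have hsplit : ∑ i', B i' k = B i k + ∑ j ∈ Finset.univ.erase i, B j k :=
        (Finset.add_sum_erase Finset.univ (fun j => B j k) (Finset.mem_univ i)).symm
      rw [hsplit, hBik]
      have : ∑ j ∈ Finset.univ.erase i, B j k = ∑ j ∈ Finset.univ.erase i, Z j k := by
        apply Finset.sum_congr rfl
        intro j hj
        exact hBoth j k (fun h => (Finset.ne_of_mem_erase hj) h.1)
      rw [this, hsum_erase]; ring
    have hcol_other : ∀ (W : Fin n → M → ℝ),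
        (∀ i' k', ¬(i' = i ∧ k' = k) → W i' k' = Z i' k') →
        ∀ k', k' ≠ k → ∑ i', W i' k' = ∑ i', Z i' k' := by
      intro W hW k' hk'
      apply Finset.sum_congr rfl
      intro j _
      exact hW j k' (fun h => hk' h.2)
    have hram : ∀ (W : Fin n → M → ℝ), (0 ≤ W i k) → (W i k ≤ 1) →
        (∀ i' k', ¬(i' = i ∧ k' = k) → W i' k' = Z i' k') →
        (∑ i', W i' k ≤ (P.q k : ℝ)) → IsRAM P W := by
      intro W hW0 hW1 hoth hcol
      refine ⟨?_, ?_, ?_, ?_⟩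
      · intro i' k'
        by_cases h1 : i' = i ∧ k' = k
        · obtain ⟨rfl, rfl⟩ := h1; exact hW0
        · rw [hoth _ _ h1]; exact hZ0 _ _
      · intro i' k'
        by_cases h1 : i' = i ∧ k' = k
        · obtain ⟨rfl, rfl⟩ := h1; exact hW1
        · rw [hoth _ _ h1]; exact hZ1 _ _
      · intro k'
        by_cases hk : k' = k
        · subst hk; exact hcol
        · rw [hcol_other W hoth k' hk]; exact hZq k'
      · intro i' k' hpos
        by_cases h1 : i' = i ∧ k' = k
        · obtain ⟨rfl, rfl⟩ := h1; exact hZr _ _ hik0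
        · rw [hoth _ _ h1] at hpos; exact hZr _ _ hpos
    have hramA : IsRAM P A := by
      apply hram A (by rw [hAik]; norm_num) (by rw [hAik]) hAoth
      rw [hcolA]; linarith
    have hramB : IsRAM P B := by
      apply hram B (by rw [hBik]) (by rw [hBik]; norm_num) hBoth
      rw [hcolB]; linarith
    have hsub : ∀ (W : Fin n → M → ℝ),
        (∀ i' k', ¬(i' = i ∧ k' = k) → W i' k' = Z i' k') →
        (W i k = 0 ∨ W i k = 1) → (fracSet W).card < (fracSet Z).card := by
      intro W hoth hWik
      apply Finset.card_lt_card
      have hss : fracSet W ⊆ fracSet Z := by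
        intro ⟨i', k'⟩ hm'
        rw [mem_fracSet] at hm' ⊢
        by_cases h1 : i' = i ∧ k' = k
        · obtain ⟨rfl, rfl⟩ := h1
          rcases hWik with h | h
          · exact absurd h hm'.1
          · exact absurd h hm'.2
        · rwa [hoth _ _ h1] at hm'
      rw [Finset.ssubset_iff_of_subset hss]
      refine ⟨(i, k), mem_fracSet.mpr hp, ?_⟩
      rw [mem_fracSet]
      rcases hWik with h | h <;> simp [h]
    refine ⟨A, B, Z i k, hramA, hramB, hsub A hAoth (Or.inr hAik),
      hsub B hBoth (Or.inl hBik), le_of_lt hik0, le_of_lt hik1, ?_⟩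
    intro i' k'
    by_cases h1 : i' = i ∧ k' = k
    · obtain ⟨rfl, rfl⟩ := h1
      rw [hAik, hBik]; ring
    · rw [hAoth _ _ h1, hBoth _ _ h1]; ring

end DecompAux

/-- Every RAM can be decomposed into a convex combination of binary
(0–1 valued) RAMs. -/
theorem ram_decomposition {n : ℕ} {M : Type*} [Fintype M] (P : MAP n M)
    (Z : Fin n → M → ℝ) (hZ : IsRAM P Z) :
    ∃ (T : ℕ) (Zs : Fin T → Fin n → M → ℝ) (lam : Fin T → ℝ),
      (∀ t, IsRAM P (Zs t)) ∧
      (∀ t i k, Zs t i k = 0 ∨ Zs t i k = 1) ∧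
      (∀ t, 0 ≤ lam t) ∧ (∑ t, lam t = 1) ∧
      (∀ i k, Z i k = ∑ t, lam t * Zs t i k) := by
  have key : ∀ N (W : Fin n → M → ℝ), IsRAM P W → (fracSet W).card ≤ N → HasDecomp P W := by
    intro N
    induction N with
    | zero =>
      intro W hW hc
      apply hasDecomp_of_binary P W hW
      intro i k
      by_contra h
      push_neg at h
      have hmem : (i, k) ∈ fracSet W := mem_fracSet.mpr ⟨h.1, h.2⟩
      have := Finset.card_pos.mpr ⟨_, hmem⟩
      omega
    | succ N ih =>
      intro W hW hc
      by_cases hne : (fracSet W).Nonempty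
      · obtain ⟨A, B, c, hA, hB, hcA, hcB, hc0, hc1, heq⟩ := decomp_step P W hW hne
        exact hasDecomp_combine P W A B c (ih A hA (by omega)) (ih B hB (by omega))
          hc0 hc1 heq
      · apply hasDecomp_of_binary P W hW
        intro i k
        by_contra h
        push_neg at h
        exact hne ⟨(i, k), mem_fracSet.mpr ⟨h.1, h.2⟩⟩
  exact key _ Z hZ le_rfl
end

section
/- Every constrained competitive equilibrium is envy-free: for every MAP (R,q), every CCE (Z*, p*) of (R,q), and all agents i, j ∈ N, if r i k ≤ r j k for every k ∈ M, then u_i(Z*) ≤ u_j(Z*). -/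
open Finset

variable {n : ℕ} {M : Type*} [Fintype M]

/-- Every constrained competitive equilibrium is envy-free: if agent
`i`'s acceptable set is contained in agent `j`'s, then `u_i(Z*) ≤ u_j(Z*)`. -/
theorem cce_envy_free {n : ℕ} {M : Type*} [Fintype M] (P : MAP n M)
    (Z : Fin n → M → ℝ) (p : M → ℝ) (h : IsCCE P Z p) (i j : Fin n)
    (hij : ∀ k, P.r i k = true → P.r j k = true) :
    util Z i ≤ util Z j := by
  obtain ⟨hram, hp, hopt⟩ := h
  obtain ⟨⟨h0, h1, hacc, hbud⟩, _⟩ := hopt i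
  exact (hopt j).2 (Z i) ⟨h0, h1, fun k hk => hij k (hacc k hk), hbud⟩
end

section
/- Every deterministic priority (serial dictatorship) solution is group strategy-proof: for every MAP (R,q), every linear order σ on the agents, every nonempty coalition S ⊆ N, and every misreport R' (with r' j k = r j k for j ∉ S and r' i k ≤ r i k for i ∈ S), it is NOT the case that u_i(ψ^σ(R',q)) ≥ u_i(ψ^σ(R,q)) for all i ∈ S with strict inequality for some i ∈ S, where u_i counts the number of units received of objects acceptable under the true matrix R. -/
open Finset

variable {n : ℕ} {M : Type*} [Fintype M]

section SDAux

variable {n : ℕ} {M : Type*} [Fintype M]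

/-- Prefix count: number of agents among the first `t` in the order `σ`
that report `k` acceptable under matrix `R`. -/
private def cnt (σ : Equiv.Perm (Fin n)) (R : Fin n → M → Bool) (t : ℕ) (k : M) : ℕ :=
  (Finset.univ.filter fun j : Fin n => (σ.symm j : ℕ) < t ∧ R j k = true).card

private lemma cnt_mono (σ : Equiv.Perm (Fin n)) (R : Fin n → M → Bool) {t t' : ℕ}
    (h : t ≤ t') (k : M) : cnt σ R t k ≤ cnt σ R t' k := by
  apply Finset.card_le_card
  intro j hj
  simp only [cnt, Finset.mem_filter] at hj ⊢
  exact ⟨hj.1, hj.2.1.trans_le h, hj.2.2⟩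

private lemma cnt_succ (σ : Equiv.Perm (Fin n)) (R : Fin n → M → Bool) (t : ℕ) (ht : t < n)
    (k : M) :
    cnt σ R (t + 1) k = cnt σ R t k + (if R (σ ⟨t, ht⟩) k = true then 1 else 0) := by
  classical
  have hset : (Finset.univ.filter fun j : Fin n => (σ.symm j : ℕ) < t + 1 ∧ R j k = true)
      = (Finset.univ.filter fun j : Fin n => (σ.symm j : ℕ) < t ∧ R j k = true) ∪
        (Finset.univ.filter fun j : Fin n => j = σ ⟨t, ht⟩ ∧ R j k = true) := by
    ext j
    simp only [Finset.mem_filter, Finset.mem_union, Finset.mem_univ, true_and,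
      Nat.lt_succ_iff_lt_or_eq]
    constructor
    · rintro ⟨h1 | h1, h2⟩
      · exact Or.inl ⟨h1, h2⟩
      · refine Or.inr ⟨?_, h2⟩
        have hj : σ.symm j = ⟨t, ht⟩ := Fin.ext h1
        have := congrArg σ hj
        simpa using this
    · rintro (⟨h1, h2⟩ | ⟨h1, h2⟩)
      · exact ⟨Or.inl h1, h2⟩
      · subst h1
        refine ⟨Or.inr ?_, h2⟩
        simp
  have hdisj : Disjoint
      (Finset.univ.filter fun j : Fin n => (σ.symm j : ℕ) < t ∧ R j k = true)
      (Finset.univ.filter fun j : Fin n => j = σ ⟨t, ht⟩ ∧ R j k = true) := by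
    rw [Finset.disjoint_left]
    intro j hj1 hj2
    simp only [Finset.mem_filter, Finset.mem_univ, true_and] at hj1 hj2
    rw [hj2.1] at hj1
    simp at hj1
  have hsingle : (Finset.univ.filter fun j : Fin n => j = σ ⟨t, ht⟩ ∧ R j k = true).card
      = (if R (σ ⟨t, ht⟩) k = true then 1 else 0) := by
    by_cases h : R (σ ⟨t, ht⟩) k = true
    · rw [if_pos h]
      have : (Finset.univ.filter fun j : Fin n => j = σ ⟨t, ht⟩ ∧ R j k = true)
          = {σ ⟨t, ht⟩} := by
        ext j
        simp only [Finset.mem_filter, Finset.mem_univ, true_and, Finset.mem_singleton]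
        constructor
        · exact fun x => x.1
        · rintro rfl; exact ⟨rfl, h⟩
      rw [this, Finset.card_singleton]
    · rw [if_neg h]
      have : (Finset.univ.filter fun j : Fin n => j = σ ⟨t, ht⟩ ∧ R j k = true) = ∅ := by
        ext j
        simp only [Finset.mem_filter, Finset.mem_univ, true_and, Finset.notMem_empty,
          iff_false, not_and]
        rintro rfl; exact h
      rw [this, Finset.card_empty]
  rw [cnt, cnt, hset, Finset.card_union_of_disjoint hdisj, hsingle]

private lemma cnt_stab (σ : Equiv.Perm (Fin n)) (R : Fin n → M → Bool) (t : ℕ) (ht : n ≤ t)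
    (k : M) : cnt σ R (t + 1) k = cnt σ R t k := by
  unfold cnt
  congr 1
  ext j
  simp only [Finset.mem_filter]
  have h1 : (σ.symm j : ℕ) < t := lt_of_lt_of_le (σ.symm j).isLt ht
  have h2 : (σ.symm j : ℕ) < t + 1 := h1.trans (Nat.lt_succ_self t)
  tauto

private lemma sd_eq (P : MAP n M) (σ : Equiv.Perm (Fin n)) (i : Fin n) (k : M) :
    SD P σ i k = if P.r i k = true ∧ cnt σ P.r (σ.symm i : ℕ) k < P.q k then 1 else 0 := by
  rfl

private lemma sd_nonneg (P : MAP n M) (σ : Equiv.Perm (Fin n)) (i : Fin n) (k : M) :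
    (0 : ℝ) ≤ SD P σ i k := by
  unfold SD
  split <;> norm_num

end SDAux

/-- Every deterministic priority (serial dictatorship) solution is
group strategy-proof: no nonempty coalition can misreport (shrinking acceptable sets,
others unchanged) so that every member weakly gains and some member strictly gains,
where utility counts units of objects acceptable under the true matrix. -/
theorem sd_group_strategyproof {n : ℕ} {M : Type*} [Fintype M]
    (P P' : MAP n M) (hq : P'.q = P.q) (σ : Equiv.Perm (Fin n))
    (S : Finset (Fin n)) (hS : S.Nonempty)
    (hout : ∀ j ∉ S, ∀ k, P'.r j k = P.r j k)
    (hin : ∀ i ∈ S, ∀ k, P'.r i k = true → P.r i k = true) :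
    ¬ ((∀ i ∈ S, trueUtil P (SD P σ) i ≤ trueUtil P (SD P' σ) i) ∧
       (∃ i ∈ S, trueUtil P (SD P σ) i < trueUtil P (SD P' σ) i)) := by
    classical
  rintro ⟨Hle, i0, hi0S, hi0lt⟩
  -- pointwise comparison of SD values for coalition members, given the invariant
  have ptle : ∀ i ∈ S,
      (∀ k, cnt σ P'.r (σ.symm i : ℕ) k = cnt σ P.r (σ.symm i : ℕ) k ∨
        (P.q k ≤ cnt σ P.r (σ.symm i : ℕ) k ∧ P.q k ≤ cnt σ P'.r (σ.symm i : ℕ) k)) →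
      ∀ k, SD P' σ i k ≤ SD P σ i k := by
    intro i hiS hinv k
    rw [sd_eq, sd_eq, hq]
    split
    case isTrue h =>
      obtain ⟨h1, h2⟩ := h
      rcases hinv k with heq | ⟨hg, hg'⟩
      · rw [heq] at h2
        rw [if_pos ⟨hin i hiS k h1, h2⟩]
      · omega
    case isFalse h =>
      split <;> norm_num
  -- derived utility comparison
  have utle : ∀ i ∈ S,
      (∀ k, cnt σ P'.r (σ.symm i : ℕ) k = cnt σ P.r (σ.symm i : ℕ) k ∨
        (P.q k ≤ cnt σ P.r (σ.symm i : ℕ) k ∧ P.q k ≤ cnt σ P'.r (σ.symm i : ℕ) k)) →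
      trueUtil P (SD P' σ) i ≤ trueUtil P (SD P σ) i := by
    intro i hiS hinv
    exact Finset.sum_le_sum fun k _ => ptle i hiS hinv k
  -- the invariant, by induction on the prefix length
  have key : ∀ t : ℕ, ∀ k, cnt σ P'.r t k = cnt σ P.r t k ∨
      (P.q k ≤ cnt σ P.r t k ∧ P.q k ≤ cnt σ P'.r t k) := by
    intro t
    induction t with
    | zero =>
      intro k
      left
      simp [cnt]
    | succ t ih =>
      intro k
      by_cases ht : t < n
      · set a : Fin n := σ ⟨t, ht⟩ with ha
        have hsa : (σ.symm a : ℕ) = t := by simp [ha]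
        by_cases haS : a ∈ S
        · -- coalition member: utilities must be equal, so SD values coincide
          have hinva : ∀ k, cnt σ P'.r (σ.symm a : ℕ) k = cnt σ P.r (σ.symm a : ℕ) k ∨
              (P.q k ≤ cnt σ P.r (σ.symm a : ℕ) k ∧ P.q k ≤ cnt σ P'.r (σ.symm a : ℕ) k) := by
            rw [hsa]; exact ih
          have hpt : ∀ k' ∈ Finset.univ.filter (fun k => P.r a k = true),
              SD P' σ a k' ≤ SD P σ a k' := fun k' _ => ptle a haS hinva k'
          have hsum : trueUtil P (SD P' σ) a = trueUtil P (SD P σ) a :=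
            le_antisymm (utle a haS hinva) (Hle a haS)
          have hEqSD : ∀ k' ∈ Finset.univ.filter (fun k => P.r a k = true),
              SD P' σ a k' = SD P σ a k' :=
            (Finset.sum_eq_sum_iff_of_le hpt).mp hsum
          rw [cnt_succ σ P.r t ht k, cnt_succ σ P'.r t ht k]
          simp only [← ha]
          by_cases hra : P.r a k = true
          · by_cases hcnt : cnt σ P.r t k < P.q k
            · -- SD P gives a the object, hence so does SD P'
              have hSDP : SD P σ a k = 1 := by
                rw [sd_eq, hsa, if_pos ⟨hra, hcnt⟩]
              have hSDP' : SD P' σ a k = 1 := by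
                rw [hEqSD k (by simp [hra]), hSDP]
              rw [sd_eq, hq, hsa] at hSDP'
              by_cases hc : P'.r a k = true ∧ cnt σ P'.r t k < P.q k
              · obtain ⟨hc1, hc2⟩ := hc
                rcases ih k with heq | ⟨hg, hg'⟩
                · left
                  rw [heq, if_pos hra, if_pos hc1]
                · omega
              · rw [if_neg hc] at hSDP'
                norm_num at hSDP'
            · right
              push_neg at hcnt
              constructor
              · split <;> omega
              · rcases ih k with heq | ⟨hg, hg'⟩
                · rw [heq] at *; split <;> omega
                · split <;> omega
          · -- k not truly acceptable to a, hence not reported either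
            have hra' : ¬ P'.r a k = true := fun h => hra (hin a haS k h)
            rw [if_neg hra, if_neg hra']
            rcases ih k with heq | ⟨hg, hg'⟩
            · left; omega
            · right; omega
        · -- non-member: reports truthfully
          rw [cnt_succ σ P.r t ht k, cnt_succ σ P'.r t ht k]
          simp only [← ha]
          rw [hout a haS k]
          rcases ih k with heq | ⟨hg, hg'⟩
          · left; omega
          · right
            constructor <;> split <;> omega
      · push_neg at ht
        rw [cnt_stab σ P.r t ht k, cnt_stab σ P'.r t ht k]
        exact ih k
  exact absurd (utle i0 hi0S fun k => key (σ.symm i0 : ℕ) k) (not_le.mpr hi0lt)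
end

section
/- The egalitarian solution is not independent of perfect objects: there exist a MAP (R,q), an agent i, and a perfect extension ([R R_{k'}], q̄) of (R,q) for agent i such that φ^ES_i([R R_{k'}], q̄) ≠ φ^ES_i(R,q) + 1. (A witness: 5 agents, one object α of capacity 4 acceptable to all, so φ^ES_i = 4/5 for each i; adding a perfect object of capacity 4 acceptable to exactly four agents yields egalitarian utility 7/4 ≠ 4/5 + 1 for those agents.) -/
open Finset

variable {n : ℕ} {M : Type*} [Fintype M]

section ESnotIPO

/-- Base problem: 5 agents, one object of capacity 4 acceptable to everyone. -/
def Pbase : MAP 5 (Fin 1) where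
  r := fun _ _ => true
  q := fun _ => 4
  q_pos := fun _ => by norm_num
  enough := fun k => by fin_cases k; decide

/-- Extended problem: add a perfect object acceptable exactly to agents ≠ 4. -/
def Pext : MAP 5 (Option (Fin 1)) where
  r := fun j k => match k with
    | none => decide (j ≠ 4)
    | some _ => true
  q := fun _ => 4
  q_pos := fun _ => by norm_num
  enough := fun k => by fin_cases k <;> decide

lemma sum_sortedVec (U : Fin n → ℝ) : ∑ j, sortedVec U j = ∑ j, U j :=
  Equiv.sum_comp (Tuple.sort U) U

lemma sortedVec_apply (U : Fin n → ℝ) (j : Fin n) :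
    sortedVec U j = U (Tuple.sort U j) := rfl

/-- The target egalitarian profile for the base problem. -/
noncomputable def Ubase : Fin 5 → ℝ := fun _ => 4/5

/-- The target egalitarian profile for the extended problem. -/
noncomputable def Uext : Fin 5 → ℝ := fun i => if i = 4 then 1 else 7/4

lemma sortedUbase (j : Fin 5) : sortedVec Ubase j = 4/5 := rfl

lemma sortedUext :
    sortedVec Uext 0 = 1 ∧ ∀ j : Fin 5, j ≠ 0 → sortedVec Uext j = 7/4 := by
  have hmono : Monotone (sortedVec Uext) := Tuple.monotone_sort Uext
  have h4 : sortedVec Uext ((Tuple.sort Uext).symm 4) = 1 := by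
    rw [sortedVec_apply, Equiv.apply_symm_apply]; rfl
  have h0le : sortedVec Uext 0 ≤ 1 := by
    rw [← h4]; exact hmono (Fin.zero_le _)
  have hσ0 : Tuple.sort Uext 0 = 4 := by
    by_contra h
    have : sortedVec Uext 0 = 7/4 := by
      rw [sortedVec_apply, Uext, if_neg h]
    linarith [h0le, this]
  constructor
  · rw [sortedVec_apply, hσ0]; rfl
  · intro j hj
    have hne : Tuple.sort Uext j ≠ 4 := by
      intro h
      exact hj ((Tuple.sort Uext).injective (by rw [h, hσ0]))
    rw [sortedVec_apply, Uext, if_neg hne]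

lemma fin5_not_lt_zero (j : Fin 5) : ¬ j < 0 := by
  simp [Fin.lt_def]

lemma Ubase_mem : Ubase ∈ effU Pbase := by
  refine ⟨fun _ _ => 4/5, ⟨fun _ _ => by norm_num, fun _ _ => by norm_num,
    fun k => ?_, fun _ _ _ => rfl⟩, ?_, fun i => ?_⟩
  · show (∑ _i : Fin 5, (4/5 : ℝ)) ≤ ((4:ℕ) : ℝ)
    rw [Fin.sum_univ_five]; norm_num
  · show (∑ i : Fin 5, util _ i) = ∑ k : Fin 1, ((4:ℕ):ℝ)
    simp only [util, Fin.sum_univ_one, Fin.sum_univ_five]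
    norm_num
  · show (4/5 : ℝ) = util _ i
    simp [util, Fin.sum_univ_one]

lemma base_leximin : ∀ U' ∈ effU Pbase, leximinLE U' Ubase := by
  rintro U' ⟨Z, ⟨_, _, _, _⟩, hsum, hU⟩
  have hsum4 : ∑ i, U' i = 4 := by
    have : (∑ k : Fin 1, ((Pbase.q k : ℕ) : ℝ)) = 4 := by
      simp [Pbase, Fin.sum_univ_one]
    rw [Finset.sum_congr rfl fun i _ => hU i, hsum, this]
  set a := sortedVec U' with ha
  have hmono : Monotone a := Tuple.monotone_sort U'
  have hsuma : a 0 + a 1 + a 2 + a 3 + a 4 = 4 := by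
    have := sum_sortedVec U'
    rw [hsum4] at this
    rw [← ha] at this
    rw [Fin.sum_univ_five] at this
    linarith
  by_cases h0 : a 0 < 4/5
  · exact Or.inr ⟨0, by rw [sortedUbase]; exact h0,
      fun j hj => absurd hj (fin5_not_lt_zero j)⟩
  · push_neg at h0
    have hge : ∀ j : Fin 5, 4/5 ≤ a j := fun j => le_trans h0 (hmono (Fin.zero_le j))
    have h1 := hge 1; have h2 := hge 2; have h3 := hge 3; have h4 := hge 4
    left
    funext j
    fin_cases j
    · show a 0 = 4/5; linarith
    · show a 1 = 4/5; linarith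
    · show a 2 = 4/5; linarith
    · show a 3 = 4/5; linarith
    · show a 4 = 4/5; linarith

lemma base_max : LeximinMaximal Pbase Ubase :=
  ⟨Ubase_mem, fun U' hU' _ => base_leximin U' hU'⟩

/-- Witness assignment for the extended problem. -/
noncomputable def Zext : Fin 5 → Option (Fin 1) → ℝ := fun j k => match k with
  | none => if j = 4 then 0 else 1
  | some _ => if j = 4 then 1 else 3/4

lemma util_ext (Z : Fin 5 → Option (Fin 1) → ℝ) (i : Fin 5) :
    util Z i = Z i none + Z i (some 0) := by
  simp [util, Fintype.sum_option, Fin.sum_univ_one]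

lemma Uext_mem : Uext ∈ effU Pext := by
  refine ⟨Zext, ⟨?_, ?_, ?_, ?_⟩, ?_, fun i => ?_⟩
  · intro i k; cases k <;> simp [Zext] <;> split <;> norm_num
  · intro i k; cases k <;> simp [Zext] <;> split <;> norm_num
  · intro k
    cases k <;>
      · show _ ≤ ((4:ℕ):ℝ)
        rw [Fin.sum_univ_five]
        simp [Zext]
        norm_num
  · intro i k hpos
    cases k with
    | none =>
      have hne : i ≠ 4 := by
        intro h; subst h; simp [Zext] at hpos
      simp [Pext, hne]
    | some k' => rfl
  · have : (∑ k : Option (Fin 1), ((Pext.q k : ℕ) : ℝ)) = 8 := by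
      simp [Pext, Fintype.sum_option, Fin.sum_univ_one]
      norm_num
    rw [this]
    rw [Finset.sum_congr rfl fun i _ => util_ext Zext i]
    rw [Fin.sum_univ_five]
    simp [Zext]
    norm_num
  · rw [util_ext]
    fin_cases i <;> simp [Zext, Uext] <;> norm_num

lemma ext_leximin : ∀ U' ∈ effU Pext, leximinLE U' Uext := by
  rintro U' ⟨Z, ⟨hZ0, hZ1, hZcap, hZr⟩, hsum, hU⟩
  obtain ⟨hb0, hbj⟩ := sortedUext
  -- agent 4 gets nothing from `none`
  have hZ4 : Z 4 none = 0 := by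
    by_contra h
    have hpos : 0 < Z 4 none := lt_of_le_of_ne (hZ0 4 none) (Ne.symm h)
    have := hZr 4 none hpos
    simp [Pext] at this
  have hU4 : U' 4 ≤ 1 := by
    rw [hU 4, util_ext, hZ4]
    simpa using hZ1 4 (some 0)
  have hUle2 : ∀ i, U' i ≤ 2 := by
    intro i
    rw [hU i, util_ext]
    have := hZ1 i none; have := hZ1 i (some 0); linarith
  have hsum8 : ∑ i, U' i = 8 := by
    have : (∑ k : Option (Fin 1), ((Pext.q k : ℕ) : ℝ)) = 8 := by
      simp [Pext, Fintype.sum_option, Fin.sum_univ_one]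
      norm_num
    rw [Finset.sum_congr rfl fun i _ => hU i, hsum, this]
  set a := sortedVec U' with ha
  have hmono : Monotone a := Tuple.monotone_sort U'
  have ha4 : a ((Tuple.sort U').symm 4) = U' 4 := by
    rw [ha, sortedVec_apply, Equiv.apply_symm_apply]
  have ha0le1 : a 0 ≤ 1 := by
    calc a 0 ≤ a ((Tuple.sort U').symm 4) := hmono (Fin.zero_le _)
    _ = U' 4 := ha4
    _ ≤ 1 := hU4
  have hale2 : ∀ j, a j ≤ 2 := fun j => by
    rw [ha, sortedVec_apply]; exact hUle2 _
  have hsuma : a 0 + a 1 + a 2 + a 3 + a 4 = 8 := by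
    have := sum_sortedVec U'
    rw [hsum8] at this
    rw [← ha, Fin.sum_univ_five] at this
    linarith
  by_cases h0 : a 0 < 1
  · exact Or.inr ⟨0, by rw [hb0]; exact h0,
      fun j hj => absurd hj (fin5_not_lt_zero j)⟩
  · push_neg at h0
    have ha0 : a 0 = 1 := le_antisymm ha0le1 h0
    by_cases h1 : a 1 < 7/4
    · refine Or.inr ⟨1, by rw [hbj 1 (by decide)]; exact h1, fun j hj => ?_⟩
      have hj0 : j = 0 := by
        have := hj; rw [Fin.lt_def] at this; omega
      rw [hj0]; show a 0 = sortedVec Uext 0; rw [ha0, hb0]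
    · push_neg at h1
      have hge : ∀ j : Fin 5, (1:ℕ) ≤ (j:ℕ) → 7/4 ≤ a j := by
        intro j hjge
        refine le_trans h1 (hmono ?_)
        rw [Fin.le_def]; exact hjge
      have h2 := hge 2 (by decide)
      have h3 := hge 3 (by decide)
      have h4 := hge 4 (by decide)
      left
      funext j
      fin_cases j
      · show a 0 = sortedVec Uext 0; rw [ha0, hb0]
      · show a 1 = sortedVec Uext 1; rw [hbj 1 (by decide)]; linarith
      · show a 2 = sortedVec Uext 2; rw [hbj 2 (by decide)]; linarith
      · show a 3 = sortedVec Uext 3; rw [hbj 3 (by decide)]; linarith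
      · show a 4 = sortedVec Uext 4; rw [hbj 4 (by decide)]; linarith

lemma ext_max : LeximinMaximal Pext Uext :=
  ⟨Uext_mem, fun U' hU' _ => ext_leximin U' hU'⟩

lemma Pext_perfect : IsPerfectExtension Pbase Pext 0 := by
  refine ⟨fun j k => rfl, fun k => rfl, by decide, by decide⟩

end ESnotIPO

/-- The egalitarian solution is not independent of perfect objects:
there are a MAP, an agent `i` and a perfect extension for `i` under which the
egalitarian utility of `i` differs from her original egalitarian utility plus one. -/
theorem es_not_ipo :
    ∃ (n m : ℕ) (P : MAP n (Fin m)) (P' : MAP n (Option (Fin m))) (i : Fin n),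
      IsPerfectExtension P P' i ∧
      ∃ U U', LeximinMaximal P U ∧ LeximinMaximal P' U' ∧ U' i ≠ U i + 1 := by
  refine ⟨5, 1, Pbase, Pext, 0, Pext_perfect, Ubase, Uext, base_max, ext_max, ?_⟩
  show (if (0 : Fin 5) = 4 then (1:ℝ) else 7/4) ≠ 4/5 + 1
  rw [if_neg (by decide : ¬ (0 : Fin 5) = 4)]
  norm_num
end

section
/- There exists a selection of the CCE solution that is independent of perfect objects: for every MAP (R,q), every CCE (Z*, p*) of (R,q), and every perfect extension ([R R_{k'}], q̄) of (R,q) for an agent i, the pair obtained by extending Z* with the column z_{j k'} = r_{j k'} for all j ∈ N and extending p* with price p_{k'} = 0 is a CCE of the extended MAP ([R R_{k'}], q̄). Consequently each agent j with r_{j k'} = 1 gets exactly one more unit of expected utility than under (Z*,p*). -/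
open Finset

variable {n : ℕ} {M : Type*} [Fintype M]

/-- There is a selection of the CCE solution that is independent of
perfect objects: extending any CCE `(Z*, p*)` by giving the new perfect object fully to
each agent accepting it, at price `0`, yields a CCE of the perfect extension; each such
agent gains exactly one unit of expected utility. -/
theorem cce_selection_ipo {n : ℕ} {M : Type*} [Fintype M] (P : MAP n M)
    (Z : Fin n → M → ℝ) (p : M → ℝ) (hZ : IsCCE P Z p)
    (P' : MAP n (Option M)) (i : Fin n) (hext : IsPerfectExtension P P' i) :
    IsCCE P' (extendZ P' Z) (extendP p) ∧
    ∀ j, P'.r j none = true → util (extendZ P' Z) j = util Z j + 1 := by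
  obtain ⟨hRAM, hp, hopt⟩ := hZ
  obtain ⟨h0, h1, hcol, hsupp⟩ := hRAM
  obtain ⟨hr, hq, hri, hqnone⟩ := hext
  have hutil : ∀ j, util (extendZ P' Z) j
      = (if P'.r j none = true then (1:ℝ) else 0) + util Z j := by
    intro j
    simp [util, extendZ, Fintype.sum_option]
  refine ⟨⟨⟨?_, ?_, ?_, ?_⟩, ?_, ?_⟩, ?_⟩
  · rintro j (_|k) <;> simp [extendZ, h0] <;> positivity
  · rintro j (_|k) <;> simp [extendZ, h1] <;> split <;> norm_num
  · rintro (_|k)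
    · simp only [extendZ, hqnone]
      rw [Finset.sum_boole]
    · simpa [extendZ, hq] using hcol k
  · rintro j (_|k) h
    · by_contra hc
      simp [extendZ, hc] at h
    · rw [hr]; exact hsupp j k (by simpa [extendZ] using h)
  · rintro (_|k)
    · simp [extendP]
    · simpa [extendP] using hp k
  · intro j
    obtain ⟨⟨b0, b1, bsupp, bbud⟩, bmax⟩ := hopt j
    constructor
    · refine ⟨?_, ?_, ?_, ?_⟩
      · rintro (_|k) <;> simp [extendZ, b0] <;> split <;> norm_num
      · rintro (_|k) <;> simp [extendZ, b1] <;> split <;> norm_num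
      · rintro (_|k) h
        · by_contra hc
          simp [extendZ, hc] at h
        · rw [hr]; exact bsupp k (by simpa [extendZ] using h)
      · rw [Fintype.sum_option]
        simpa [extendP, extendZ] using bbud
    · intro z ⟨z0, z1, zsupp, zbud⟩
      have hz' : InBudget P p j (fun k => z (some k)) := by
        refine ⟨fun k => z0 _, fun k => z1 _, fun k h => by rw [← hr]; exact zsupp _ h, ?_⟩
        calc ∑ k, p k * z (some k) = ∑ k : Option M, extendP p k * z k := by
              rw [Fintype.sum_option]; simp [extendP]
          _ ≤ 1 := zbud
      have hmax := bmax _ hz'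
      rw [Fintype.sum_option, hutil]
      by_cases hc : P'.r j none = true
      · have : z none ≤ 1 := z1 none
        simp only [hc]
        norm_num
        linarith
      · have : z none = 0 := by
          by_contra h
          exact hc (zsupp none (lt_of_le_of_ne (z0 none) (Ne.symm h)))
        simp only [eq_false_of_ne_true hc]
        norm_num
        linarith
  · intro j hj
    rw [hutil j, hj]
    norm_num
    ring
end
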